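/- arXiv:2012.11811 — 3 statements merged into one kernel-verified Lean document; each statement's English description precedes it below -/
import Mathlib

section
/- Let a, b be hyperbolic-like elements of Homeo^ℤ(ℝ) with unlinked fixed sets, such that there exist four consecutive points of Fix(a) ∪ Fix(b) ordered a₊ < a₋ < b₋ < b₊, where a₊, b₊ are attracting and a₋, b₋ repelling. Then for every N > 0 the composition bᴺ ∘ aᴺ has a fixed point. -/
open Filter Topology Set

/-- `f` commutes with integer translation: `f (x+1) = f x + 1`. -/
def CommT (f : ℝ → ℝ) : Prop := ∀ x : ℝ, f (x + 1) = f x + 1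

/-- `x` is an attracting fixed point of `f`: it is fixed and forward iterates of
all nearby points converge to it. -/
def IsAttractingFixedPt (f : ℝ → ℝ) (x : ℝ) : Prop :=
  f x = x ∧ ∃ ε > 0, ∀ y : ℝ, |y - x| < ε →
    Tendsto (fun n => f^[n] y) atTop (𝓝 x)

/-- `x` is a repelling fixed point of the bijection `g`: attracting for `g⁻¹`. -/
def IsRepellingFixedPt (g : Equiv.Perm ℝ) (x : ℝ) : Prop :=
  IsAttractingFixedPt (⇑g⁻¹) x

/-- A hyperbolic-like element: exactly two fixed points in `[0,1)`,
one attracting and one repelling. -/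
def HyperbolicLike (g : Equiv.Perm ℝ) : Prop :=
  ∃ p q : ℝ, p ≠ q ∧ p ∈ Set.Ico (0:ℝ) 1 ∧ q ∈ Set.Ico (0:ℝ) 1 ∧
    IsAttractingFixedPt (⇑g) p ∧ IsRepellingFixedPt g q ∧
    {x ∈ Set.Ico (0:ℝ) 1 | g x = x} = {p, q}

/-- The fixed sets of `a` and `b` are unlinked: they share no fixed point and
some complementary interval of `Fix a` contains no fixed point of `b`. -/
def UnlinkedFix (a b : Equiv.Perm ℝ) : Prop :=
  (∀ x : ℝ, ¬ (a x = x ∧ b x = x)) ∧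
  ∃ u v : ℝ, u < v ∧ a u = u ∧ a v = v ∧
    (∀ z, u < z → z < v → a z ≠ z) ∧ (∀ z, u < z → z < v → b z ≠ z)

lemma perm_cont (g : Equiv.Perm ℝ) (hm : StrictMono g) : Continuous g := by
  have := (hm.orderIsoOfSurjective _ g.surjective).continuous
  rwa [StrictMono.coe_orderIsoOfSurjective] at this

lemma inv_strictMono (g : Equiv.Perm ℝ) (hm : StrictMono g) : StrictMono (⇑g⁻¹) := by
  intro x y hxy
  have := hm.lt_iff_lt (a := g⁻¹ x) (b := g⁻¹ y)
  rw [(show ∀ x, g (g⁻¹ x) = x from g.apply_symm_apply), (show ∀ x, g (g⁻¹ x) = x from g.apply_symm_apply)] at this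
  exact this.mp hxy

lemma fix_of_inv_fix (g : Equiv.Perm ℝ) {r : ℝ} (h : (⇑g⁻¹) r = r) : g r = r := by
  have : g (g⁻¹ r) = r := g.apply_symm_apply r
  rwa [h] at this

/-- Lemma A: right of a repelling fixed point, before the next fixed point, g > id. -/
lemma lemA (g : Equiv.Perm ℝ) (hm : StrictMono g) (r c : ℝ) (hrc : r < c)
    (hr : IsRepellingFixedPt g r) (hno : ∀ x ∈ Set.Ioo r c, g x ≠ x) :
    ∀ y ∈ Set.Ioo r c, y < g y := by
  have hc : Continuous g := perm_cont g hm
  have hgr : g r = r := fix_of_inv_fix g hr.1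
  by_contra hcon
  push_neg at hcon
  obtain ⟨y, hy, hgy⟩ := hcon
  have hgy' : g y < y := lt_of_le_of_ne hgy (hno y hy)
  -- g < id on the whole interval
  have hneg : ∀ z ∈ Set.Ioo r c, g z < z := by
    intro z hz
    rcases lt_or_ge (g z) z with h | h
    · exact h
    have h' : z < g z := lt_of_le_of_ne h (Ne.symm (hno z hz))
    have hcont : ContinuousOn (fun t => g t - t) (Set.uIcc y z) :=
      (hc.sub continuous_id).continuousOn
    have hmem : (0 : ℝ) ∈ Set.uIcc (g y - y) (g z - z) := by
      rw [Set.mem_uIcc]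
      left
      constructor <;> linarith
    obtain ⟨x, hx, hx0⟩ := intermediate_value_uIcc hcont hmem
    have hxI : x ∈ Set.Ioo r c :=
      Set.ordConnected_Ioo.uIcc_subset hy hz hx
    have hx0' : g x - x = 0 := hx0
    exact absurd (show g x = x by linarith) (hno x hxI)
  -- hence g⁻¹ > id on the interval
  have hinv : ∀ z ∈ Set.Ioo r c, z < (⇑g⁻¹) z := by
    intro z hz
    have h1 : r < (⇑g⁻¹) z := by
      have := hm.lt_iff_lt (a := r) (b := g⁻¹ z)
      rw [(show ∀ x, g (g⁻¹ x) = x from g.apply_symm_apply), hgr] at this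
      exact this.mp hz.1
    by_contra hle
    push_neg at hle
    have hz' : (⇑g⁻¹) z ∈ Set.Ioo r c := ⟨h1, lt_of_le_of_lt hle hz.2⟩
    have := hneg _ hz'
    rw [(show ∀ x, g (g⁻¹ x) = x from g.apply_symm_apply)] at this
    exact absurd this (not_lt.mpr hle)
  -- contradiction with repelling
  obtain ⟨ε, hε, htend⟩ := hr.2
  set w := r + min ε (c - r) / 2 with hw
  have hmin : 0 < min ε (c - r) := lt_min hε (by linarith)
  have hw1 : r < w := by simp only [hw]; linarith
  have hw2 : w < c := by
    have : min ε (c - r) ≤ c - r := min_le_right _ _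
    simp only [hw]; linarith
  have hwε : |w - r| < ε := by
    have h1 : min ε (c - r) ≤ ε := min_le_left _ _
    rw [abs_lt]; constructor <;> simp only [hw] <;> linarith
  have hT := htend w hwε
  have hminv : StrictMono (⇑g⁻¹) := inv_strictMono g hm
  have hmono : ∀ n, w ≤ (⇑g⁻¹)^[n] w := by
    intro n
    induction n with
    | zero => simp
    | succ n ih =>
      rw [Function.iterate_succ_apply']
      have h2 : w < (⇑g⁻¹) w := hinv w ⟨hw1, hw2⟩
      exact le_of_lt (lt_of_lt_of_le h2 (hminv.monotone ih))
  have : w ≤ r := ge_of_tendsto' hT hmono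
  linarith

/-- Lemma B: left of a repelling fixed point, g < id. -/
lemma lemB (g : Equiv.Perm ℝ) (hm : StrictMono g) (r c : ℝ) (hcr : c < r)
    (hr : IsRepellingFixedPt g r) (hno : ∀ x ∈ Set.Ioo c r, g x ≠ x) :
    ∀ y ∈ Set.Ioo c r, g y < y := by
  have hc : Continuous g := perm_cont g hm
  have hgr : g r = r := fix_of_inv_fix g hr.1
  by_contra hcon
  push_neg at hcon
  obtain ⟨y, hy, hgy⟩ := hcon
  have hgy' : y < g y := lt_of_le_of_ne hgy (Ne.symm (hno y hy))
  have hpos : ∀ z ∈ Set.Ioo c r, z < g z := by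
    intro z hz
    rcases lt_or_ge z (g z) with h | h
    · exact h
    have h' : g z < z := lt_of_le_of_ne h (hno z hz)
    have hcont : ContinuousOn (fun t => g t - t) (Set.uIcc y z) :=
      (hc.sub continuous_id).continuousOn
    have hmem : (0 : ℝ) ∈ Set.uIcc (g y - y) (g z - z) := by
      rw [Set.mem_uIcc]
      right
      constructor <;> linarith
    obtain ⟨x, hx, hx0⟩ := intermediate_value_uIcc hcont hmem
    have hxI : x ∈ Set.Ioo c r :=
      Set.ordConnected_Ioo.uIcc_subset hy hz hx
    have hx0' : g x - x = 0 := hx0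
    exact absurd (show g x = x by linarith) (hno x hxI)
  have hinv : ∀ z ∈ Set.Ioo c r, (⇑g⁻¹) z < z := by
    intro z hz
    have h1 : (⇑g⁻¹) z < r := by
      have := hm.lt_iff_lt (a := g⁻¹ z) (b := r)
      rw [(show ∀ x, g (g⁻¹ x) = x from g.apply_symm_apply), hgr] at this
      exact this.mp hz.2
    by_contra hle
    push_neg at hle
    have hz' : (⇑g⁻¹) z ∈ Set.Ioo c r := ⟨lt_of_lt_of_le hz.1 hle, h1⟩
    have := hpos _ hz'
    rw [(show ∀ x, g (g⁻¹ x) = x from g.apply_symm_apply)] at this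
    exact absurd this (not_lt.mpr hle)
  obtain ⟨ε, hε, htend⟩ := hr.2
  set w := r - min ε (r - c) / 2 with hw
  have hmin : 0 < min ε (r - c) := lt_min hε (by linarith)
  have hw1 : w < r := by simp only [hw]; linarith
  have hw2 : c < w := by
    have : min ε (r - c) ≤ r - c := min_le_right _ _
    simp only [hw]; linarith
  have hwε : |w - r| < ε := by
    have h1 : min ε (r - c) ≤ ε := min_le_left _ _
    rw [abs_lt]; constructor <;> simp only [hw] <;> linarith
  have hT := htend w hwε
  have hminv : StrictMono (⇑g⁻¹) := inv_strictMono g hm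
  have hmono : ∀ n, (⇑g⁻¹)^[n] w ≤ w := by
    intro n
    induction n with
    | zero => simp
    | succ n ih =>
      rw [Function.iterate_succ_apply']
      have h2 : (⇑g⁻¹) w < w := hinv w ⟨hw2, hw1⟩
      exact le_of_lt (lt_of_le_of_lt (hminv.monotone ih) h2)
  have : r ≤ w := le_of_tendsto' hT hmono
  linarith

/-- unlinked hyperbolic-like elements with consecutive fixed points
ordered a+ < a- < b- < b+ : every b^N ∘ a^N (N > 0) has a fixed point. -/
theorem stmt6 (a b : Equiv.Perm ℝ)
    (hma : StrictMono a) (hmb : StrictMono b) (hca : CommT a) (hcb : CommT b)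
    (hha : HyperbolicLike a) (hhb : HyperbolicLike b)
    (hunl : UnlinkedFix a b)
    (ap am bm bp : ℝ)
    (hap : IsAttractingFixedPt (⇑a) ap) (ham : IsRepellingFixedPt a am)
    (hbm : IsRepellingFixedPt b bm) (hbp : IsAttractingFixedPt (⇑b) bp)
    (h1 : ap < am) (h2 : am < bm) (h3 : bm < bp)
    (hconsec : ∀ x : ℝ, ap < x → x < bp → (a x = x ∨ b x = x) → x = am ∨ x = bm) :
    ∀ N : ℕ, 0 < N → ∃ x : ℝ, (⇑b)^[N] ((⇑a)^[N] x) = x := by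
  intro N hN
  obtain ⟨M, rfl⟩ := Nat.exists_eq_succ_of_ne_zero hN.ne'
  have haam : a am = am := fix_of_inv_fix a ham.1
  have hbbm : b bm = bm := fix_of_inv_fix b hbm.1
  have noA : ∀ x ∈ Set.Ioo am bp, a x ≠ x := by
    rintro x ⟨hx1, hx2⟩ hfix
    rcases hconsec x (h1.trans hx1) hx2 (Or.inl hfix) with h | h
    · exact hx1.ne' h
    · rw [h] at hfix
      exact hunl.1 bm ⟨hfix, hbbm⟩
  have noB : ∀ x ∈ Set.Ioo ap bm, b x ≠ x := by
    rintro x ⟨hx1, hx2⟩ hfix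
    rcases hconsec x hx1 (hx2.trans h3) (Or.inr hfix) with h | h
    · rw [h] at hfix
      exact hunl.1 am ⟨haam, hfix⟩
    · exact hx2.ne h
  have hA := lemA a hma am bp (h2.trans h3) ham noA
  have hB := lemB b hmb bm ap (h1.trans h2) hbm noB
  have habm : bm < a bm := hA bm ⟨h2, h3⟩
  have hbam : b am < am := hB am ⟨h1, h2⟩
  -- iterates of a push bm strictly up
  have key1 : ∀ n : ℕ, bm < (⇑a)^[n + 1] bm := by
    intro n
    induction n with
    | zero => simpa using habm
    | succ n ih =>
      rw [Function.iterate_succ_apply']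
      exact lt_of_lt_of_le habm (hma.monotone ih.le)
  -- b-iterates of anything above bm stay above bm
  have key2 : ∀ z : ℝ, bm < z → ∀ n : ℕ, bm < (⇑b)^[n] z := by
    intro z hz n
    induction n with
    | zero => simpa using hz
    | succ n ih =>
      rw [Function.iterate_succ_apply']
      calc bm = b bm := hbbm.symm
        _ < b ((⇑b)^[n] z) := hmb ih
  -- b-iterates of am go strictly down
  have key3 : ∀ n : ℕ, (⇑b)^[n + 1] am < am := by
    intro n
    induction n with
    | zero => simpa using hbam
    | succ n ih =>
      rw [Function.iterate_succ_apply']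
      exact lt_of_le_of_lt (hmb.monotone ih.le) hbam
  have haam' : (⇑a)^[M + 1] am = am := Function.iterate_fixed haam _
  set F : ℝ → ℝ := fun x => (⇑b)^[M + 1] ((⇑a)^[M + 1] x) - x with hF
  have hcont : Continuous F :=
    (((perm_cont b hmb).iterate _).comp ((perm_cont a hma).iterate _)).sub continuous_id
  have hFam : F am < 0 := by
    have := key3 M
    simp only [hF, haam']
    linarith
  have hFbm : 0 < F bm := by
    have := key2 _ (key1 M) (M + 1)
    simp only [hF]
    linarith
  have h0 : (0 : ℝ) ∈ Set.Icc (F am) (F bm) := ⟨hFam.le, hFbm.le⟩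
  obtain ⟨x, _, hx0⟩ := intermediate_value_Icc h2.le hcont.continuousOn h0
  refine ⟨x, ?_⟩
  have hx0' : (⇑b)^[M + 1] ((⇑a)^[M + 1] x) - x = 0 := hx0
  linarith
end

section
/- Let a, b be hyperbolic-like elements of Homeo^ℤ(ℝ) whose fixed sets are unlinked, with consecutive fixed points ordered a₊ < a₋ < b₊ < b₋ and no other fixed points in between. Then there exist n, m ∈ ℤ such that aⁿ ∘ bᵐ is fixed-point free. -/
open Filter Topology Set

namespace Stmt8Aux

/-- Integer version of `CommT`. -/
lemma commT_int {f : ℝ → ℝ} (hf : CommT f) (x : ℝ) (k : ℤ) :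
    f (x + k) = f x + k := by
  induction k using Int.induction_on with
  | zero => simp
  | succ n ih =>
      have h1 : x + ((n : ℤ) + 1 : ℤ) = (x + (n : ℤ)) + 1 := by push_cast; ring
      rw [h1, hf, ih]; push_cast; ring
  | pred n ih =>
      have h1 : x + ((-(n : ℤ) - 1 : ℤ) : ℝ) + 1 = x + ((-(n : ℤ) : ℤ) : ℝ) := by
        push_cast; ring
      have h2 := hf (x + ((-(n : ℤ) - 1 : ℤ) : ℝ))
      rw [h1, ih] at h2
      push_cast at h2 ⊢
      linarith

lemma commT_iterate {f : ℝ → ℝ} (hf : CommT f) (n : ℕ) : CommT f^[n] := by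
  induction n with
  | zero => intro x; simp
  | succ k ih =>
      intro x
      rw [Function.iterate_succ_apply, Function.iterate_succ_apply, hf, ih]

lemma commT_inv {g : Equiv.Perm ℝ} (hg : CommT ⇑g) : CommT ⇑g⁻¹ := by
  intro x
  apply g.injective
  rw [Equiv.Perm.coe_inv, Equiv.apply_symm_apply, hg, Equiv.apply_symm_apply]

lemma inv_strictMono {g : Equiv.Perm ℝ} (hm : StrictMono ⇑g) : StrictMono ⇑g⁻¹ := by
  intro x y hxy
  rw [← hm.lt_iff_lt, Equiv.Perm.coe_inv, Equiv.apply_symm_apply, Equiv.apply_symm_apply]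
  exact hxy

/-- Near an attracting fixed point (on the right), the map decreases. -/
lemma attract_dec {f : ℝ → ℝ} (hm : StrictMono f) {x : ℝ}
    (h : IsAttractingFixedPt f x) :
    ∃ ε > 0, ∀ y : ℝ, x < y → y < x + ε → f y < y := by
  obtain ⟨_, ε, hε, hcon⟩ := h
  refine ⟨ε, hε, fun y h1 h2 => ?_⟩
  by_contra hle
  push_neg at hle
  have hmonoseq : ∀ j : ℕ, y ≤ f^[j] y := by
    intro j
    induction j with
    | zero => simp
    | succ k ih =>
        calc y ≤ f^[k] y := ih
        _ ≤ f^[k] (f y) := (hm.monotone.iterate k) hle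
        _ = f^[k + 1] y := (Function.iterate_succ_apply f k y).symm
  have habs : |y - x| < ε := by
    rw [abs_of_pos (by linarith)]; linarith
  have htend := hcon y habs
  have hev : ∀ᶠ j : ℕ in atTop, f^[j] y ∈ Iio y :=
    htend (Iio_mem_nhds h1)
  obtain ⟨j, hj⟩ := hev.exists
  exact absurd (hmonoseq j) (not_le.mpr hj)

/-- Near a repelling fixed point (on the right), the map increases. -/
lemma repel_inc {g : Equiv.Perm ℝ} (hm : StrictMono ⇑g) {x : ℝ}
    (h : IsRepellingFixedPt g x) :
    ∃ ε > 0, ∀ y : ℝ, x < y → y < x + ε → y < g y := by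
  obtain ⟨ε, hε, hdec⟩ := attract_dec (inv_strictMono hm) h
  refine ⟨ε, hε, fun y h1 h2 => ?_⟩
  have := hdec y h1 h2
  have h3 : g (g⁻¹ y) < g y := hm this
  rwa [Equiv.Perm.coe_inv, Equiv.apply_symm_apply] at h3

lemma notboth {g : Equiv.Perm ℝ} (hm : StrictMono ⇑g) {x : ℝ}
    (ha : IsAttractingFixedPt (⇑g) x) (hr : IsRepellingFixedPt g x) : False := by
  obtain ⟨ε₁, hε₁, hd⟩ := attract_dec hm ha
  obtain ⟨ε₂, hε₂, hi⟩ := repel_inc hm hr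
  set y := x + min ε₁ ε₂ / 2 with hy
  have hminpos : 0 < min ε₁ ε₂ := lt_min hε₁ hε₂
  have hle1 : min ε₁ ε₂ ≤ ε₁ := min_le_left _ _
  have hle2 : min ε₁ ε₂ ≤ ε₂ := min_le_right _ _
  have hxy : x < y := by rw [hy]; linarith
  have h1 : y < x + ε₁ := by rw [hy]; linarith
  have h2 : y < x + ε₂ := by rw [hy]; linarith
  exact absurd (hi y hxy h2) (not_lt.mpr (le_of_lt (hd y hxy h1)))

lemma attract_translate {f : ℝ → ℝ} (hc : CommT f) {x : ℝ}
    (h : IsAttractingFixedPt f x) (k : ℤ) : IsAttractingFixedPt f (x + k) := by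
  obtain ⟨hfx, ε, hε, hcon⟩ := h
  refine ⟨by rw [commT_int hc, hfx], ε, hε, fun y hy => ?_⟩
  have habs : |y - (k : ℝ) - x| < ε := by
    have : y - (k : ℝ) - x = y - (x + k) := by ring
    rw [this]; exact hy
  have htend := hcon (y - (k : ℝ)) habs
  have hiter : ∀ j : ℕ, f^[j] y = f^[j] (y - (k : ℝ)) + (k : ℝ) := by
    intro j
    have := commT_int (commT_iterate hc j) (y - (k : ℝ)) k
    rw [← this]; ring_nf
  have := htend.add_const (k : ℝ)
  refine this.congr fun j => ?_
  exact (hiter j).symm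

lemma repel_translate {g : Equiv.Perm ℝ} (hc : CommT ⇑g) {x : ℝ}
    (h : IsRepellingFixedPt g x) (k : ℤ) : IsRepellingFixedPt g (x + k) :=
  attract_translate (commT_inv hc) h k

lemma perm_continuous (g : Equiv.Perm ℝ) (hm : StrictMono ⇑g) : Continuous ⇑g := by
  have h := (StrictMono.orderIsoOfSurjective ⇑g hm g.surjective).continuous
  rwa [StrictMono.coe_orderIsoOfSurjective] at h

/-- Sign constancy: on an interval `(r, s)` with no fixed points, `r` repelling,
the map is strictly above the identity. -/
lemma pos_on_interval (g : Equiv.Perm ℝ) (hm : StrictMono ⇑g) (r s : ℝ)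
    (hrep : IsRepellingFixedPt g r)
    (hnofix : ∀ z, r < z → z < s → g z ≠ z) :
    ∀ y, r < y → y < s → y < g y := by
  intro y hy1 hy2
  rcases lt_trichotomy (g y) y with hlt | heq | hgt
  · exfalso
    obtain ⟨ε, hε, hi⟩ := repel_inc hm hrep
    set w := r + min ε (y - r) / 2 with hw
    have hminpos : 0 < min ε (y - r) := lt_min hε (by linarith)
    have hle1 : min ε (y - r) ≤ ε := min_le_left _ _
    have hle2 : min ε (y - r) ≤ y - r := min_le_right _ _
    have hw1 : r < w := by rw [hw]; linarith
    have hw2 : w < r + ε := by rw [hw]; linarith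
    have hwy : w < y := by rw [hw]; linarith
    have hgw : w < g w := hi w hw1 hw2
    -- IVT on fun t => g t - t over [w, y]
    have hcont : Continuous (fun t : ℝ => g t - t) :=
      (perm_continuous g hm).sub continuous_id
    have hivt : (0 : ℝ) ∈ Set.Icc (g y - y) (g w - w) := by
      constructor <;> [linarith; linarith]
    have := intermediate_value_Icc' (le_of_lt hwy) hcont.continuousOn hivt
    obtain ⟨t, ht, ht0⟩ := this
    have htfix : g t = t := by dsimp at ht0; linarith
    have ht1 : r < t := lt_of_lt_of_le hw1 ht.1
    have ht2 : t < s := lt_of_le_of_lt ht.2 hy2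
    exact hnofix t ht1 ht2 htfix
  · exact absurd heq (hnofix y hy1 hy2)
  · exact hgt

/-- Iterates stay in an invariant interval and do not decrease. -/
lemma iter_ge (g : Equiv.Perm ℝ) (hm : StrictMono ⇑g) (r s : ℝ)
    (hs : g s = s) (hpos : ∀ y, r < y → y < s → y < g y) :
    ∀ n y, r < y → y < s → (y ≤ (⇑g)^[n] y ∧ r < (⇑g)^[n] y ∧ (⇑g)^[n] y < s) := by
  intro n
  induction n with
  | zero => intro y h1 h2; simp [h1, h2]
  | succ k ih =>
      intro y h1 h2
      obtain ⟨ha, hb, hc⟩ := ih y h1 h2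
      have hgz : (⇑g)^[k] y < g ((⇑g)^[k] y) := hpos _ hb hc
      have hlt : g ((⇑g)^[k] y) < s := by
        have := hm hc; rwa [hs] at this
      rw [Function.iterate_succ_apply']
      exact ⟨le_trans ha (le_of_lt hgz), lt_trans hb hgz, hlt⟩

/-- From any point of the invariant interval, iterates eventually exceed any
threshold below `s`. -/
lemma reach (g : Equiv.Perm ℝ) (hm : StrictMono ⇑g) (r s : ℝ)
    (hs : g s = s) (hpos : ∀ y, r < y → y < s → y < g y)
    (hnofix : ∀ z, r < z → z < s → g z ≠ z)
    (y₀ : ℝ) (h1 : r < y₀) (h2 : y₀ < s) (t : ℝ) (ht : t < s) :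
    ∃ n : ℕ, t < (⇑g)^[n] y₀ := by
  set S : ℕ → ℝ := fun n => (⇑g)^[n] y₀ with hS
  have hin : ∀ n, r < S n ∧ S n < s := fun n =>
    ⟨(iter_ge g hm r s hs hpos n y₀ h1 h2).2.1, (iter_ge g hm r s hs hpos n y₀ h1 h2).2.2⟩
  have hmono : Monotone S := by
    apply monotone_nat_of_le_succ
    intro n
    have := hpos (S n) (hin n).1 (hin n).2
    have heq : S (n + 1) = g (S n) := Function.iterate_succ_apply' _ _ _
    rw [heq]; exact le_of_lt this
  have hbdd : BddAbove (Set.range S) := by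
    refine ⟨s, fun z hz => ?_⟩
    obtain ⟨n, rfl⟩ := hz
    exact le_of_lt (hin n).2
  have htend : Tendsto S atTop (𝓝 (⨆ n, S n)) := tendsto_atTop_ciSup hmono hbdd
  set L := ⨆ n, S n with hL
  have hLle : L ≤ s := ciSup_le fun n => le_of_lt (hin n).2
  have hLgt : r < L := lt_of_lt_of_le (hin 0).1 (le_ciSup hbdd 0)
  have hcont : Continuous ⇑g := perm_continuous g hm
  have ht1 : Tendsto (fun n => g (S n)) atTop (𝓝 (g L)) :=
    (hcont.continuousAt).tendsto.comp htend
  have ht2 : Tendsto (fun n => S (n + 1)) atTop (𝓝 L) :=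
    htend.comp (tendsto_add_atTop_nat 1)
  have heq2 : (fun n => S (n + 1)) = fun n => g (S n) := by
    funext n; exact Function.iterate_succ_apply' _ _ _
  rw [heq2] at ht2
  have hfixL : g L = L := tendsto_nhds_unique ht1 ht2
  have hLs : L = s := by
    rcases lt_or_eq_of_le hLle with h | h
    · exact absurd hfixL (hnofix L hLgt h)
    · exact h
  have : t < L := by rw [hLs]; exact ht
  rw [hL] at this
  exact (lt_ciSup_iff hbdd).mp this

lemma fixchar (a : Equiv.Perm ℝ) (hma : StrictMono ⇑a) (hca : CommT ⇑a)
    (hha : HyperbolicLike a) (ap am : ℝ)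
    (hap : IsAttractingFixedPt ⇑a ap) (ham : IsRepellingFixedPt a am) :
    ∀ z, a z = z → (∃ k : ℤ, z = ap + k) ∨ (∃ k : ℤ, z = am + k) := by
  obtain ⟨p, q, hpq, hp01, hq01, hpatt, hqrep, hfixset⟩ := hha
  have hfrac : ∀ w, a w = w → w - (⌊w⌋:ℝ) = p ∨ w - (⌊w⌋:ℝ) = q := by
    intro w hw
    have h0 : (0:ℝ) ≤ w - (⌊w⌋:ℝ) := by linarith [Int.floor_le w]
    have h1 : w - (⌊w⌋:ℝ) < 1 := by linarith [Int.lt_floor_add_one w]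
    have hfix : a (w - (⌊w⌋:ℝ)) = w - (⌊w⌋:ℝ) := by
      have hc := commT_int hca w (-⌊w⌋)
      push_cast at hc
      have he : w + -(⌊w⌋:ℝ) = w - (⌊w⌋:ℝ) := by ring
      rw [he] at hc
      rw [hc, hw]; ring
    have hmem : (w - (⌊w⌋:ℝ)) ∈ {x ∈ Set.Ico (0:ℝ) 1 | a x = x} := ⟨⟨h0, h1⟩, hfix⟩
    rw [hfixset] at hmem
    simpa using hmem
  have hapfix : a ap = ap := hap.1
  have hamfix : a am = am := (congrArg a ham.1).symm.trans (a.apply_symm_apply am)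
  have happ : ap - (⌊ap⌋:ℝ) = p := by
    rcases hfrac ap hapfix with h | h
    · exact h
    · exfalso
      have hatt : IsAttractingFixedPt ⇑a (ap + ((-⌊ap⌋ : ℤ):ℝ)) := attract_translate hca hap _
      have he : ap + ((-⌊ap⌋ : ℤ):ℝ) = ap - (⌊ap⌋:ℝ) := by push_cast; ring
      rw [he, h] at hatt
      exact notboth hma hatt hqrep
  have hamq : am - (⌊am⌋:ℝ) = q := by
    rcases hfrac am hamfix with h | h
    · exfalso
      have hrep : IsRepellingFixedPt a (am + ((-⌊am⌋ : ℤ):ℝ)) := repel_translate hca ham _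
      have he : am + ((-⌊am⌋ : ℤ):ℝ) = am - (⌊am⌋:ℝ) := by push_cast; ring
      rw [he, h] at hrep
      exact notboth hma hpatt hrep
    · exact h
  intro z hz
  rcases hfrac z hz with h | h
  · exact Or.inl ⟨⌊z⌋ - ⌊ap⌋, by push_cast; linarith⟩
  · exact Or.inr ⟨⌊z⌋ - ⌊am⌋, by push_cast; linarith⟩

end Stmt8Aux

open Stmt8Aux

/-- hyperbolic-like elements with unlinked fixed sets ordered
a+ < a- < b+ < b- : some a^n ∘ b^m is fixed-point free. -/
theorem stmt8 (a b : Equiv.Perm ℝ)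
    (hma : StrictMono a) (hmb : StrictMono b) (hca : CommT a) (hcb : CommT b)
    (hha : HyperbolicLike a) (hhb : HyperbolicLike b)
    (hunl : UnlinkedFix a b)
    (ap am bp bm : ℝ)
    (hap : IsAttractingFixedPt (⇑a) ap) (ham : IsRepellingFixedPt a am)
    (hbp : IsAttractingFixedPt (⇑b) bp) (hbm : IsRepellingFixedPt b bm)
    (h1 : ap < am) (h2 : am < bp) (h3 : bp < bm)
    (hconsec : ∀ x : ℝ, ap < x → x < bm → (a x = x ∨ b x = x) → x = am ∨ x = bp) :
    ∃ n m : ℤ, ∀ x : ℝ, (a ^ n) ((b ^ m) x) ≠ x := by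
  classical
  have habfix := hunl.1
  have hapfix : a ap = ap := hap.1
  have hbpfix : b bp = bp := hbp.1
  have hamfix : a am = am := (congrArg a ham.1).symm.trans (a.apply_symm_apply am)
  have hbmfix : b bm = bm := (congrArg b hbm.1).symm.trans (b.apply_symm_apply bm)
  have hfa := fixchar a hma hca hha ap am hap ham
  have hfb := fixchar b hmb hcb hhb bp bm hbp hbm
  have hnofa : ∀ z, am < z → z < ap + 1 → a z ≠ z := by
    intro z hz1 hz2 hz
    rcases hfa z hz with ⟨k, hk⟩ | ⟨k, hk⟩ <;>
    · have h0 : (0:ℤ) < k := by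
        have : (0:ℝ) < (k:ℝ) := by linarith
        exact_mod_cast this
      have hk1 : (1:ℝ) ≤ (k:ℝ) := by exact_mod_cast h0
      linarith
  have hnofb : ∀ z, bm < z → z < bp + 1 → b z ≠ z := by
    intro z hz1 hz2 hz
    rcases hfb z hz with ⟨k, hk⟩ | ⟨k, hk⟩ <;>
    · have h0 : (0:ℤ) < k := by
        have : (0:ℝ) < (k:ℝ) := by linarith
        exact_mod_cast this
      have hk1 : (1:ℝ) ≤ (k:ℝ) := by exact_mod_cast h0
      linarith
  have hap1 : a (ap + 1) = ap + 1 := by have := hca ap; rw [hapfix] at this; exact this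
  have ham1 : a (am + 1) = am + 1 := by have := hca am; rw [hamfix] at this; exact this
  have hbp1 : b (bp + 1) = bp + 1 := by have := hcb bp; rw [hbpfix] at this; exact this
  have key1 : bm < ap + 1 := by
    rcases lt_trichotomy bm (ap + 1) with h | h | h
    · exact h
    · exact absurd ⟨by rw [h]; exact hap1, hbmfix⟩ (habfix bm)
    · exfalso
      rcases hconsec (ap + 1) (by linarith) h (Or.inl hap1) with he | he
      · have hatt : IsAttractingFixedPt ⇑a (ap + ((1:ℤ):ℝ)) := attract_translate hca hap 1
        have he2 : ap + ((1:ℤ):ℝ) = ap + 1 := by push_cast; ring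
        rw [he2, he] at hatt
        exact notboth hma hatt ham
      · exact habfix (ap + 1) ⟨hap1, by rw [he]; exact hbpfix⟩
  have hposa : ∀ y, am < y → y < ap + 1 → y < a y :=
    pos_on_interval a hma am (ap + 1) ham hnofa
  have hposb : ∀ y, bm < y → y < bp + 1 → y < b y :=
    pos_on_interval b hmb bm (bp + 1) hbm hnofb
  have hposb' : ∀ y, bm - 1 < y → y < bp → y < b y := by
    intro y hy1 hy2
    have h := hposb (y + 1) (by linarith) (by linarith)
    have hb := hcb y
    linarith [hb ▸ h]
  obtain ⟨m, hm⟩ := reach b hmb bm (bp + 1) hbp1 hposb hnofb (ap + 1) key1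
    (by linarith) (am + 1) (by linarith)
  have hm0 : m ≠ 0 := by
    intro h0; rw [h0] at hm; simp at hm; linarith
  obtain ⟨m', rfl⟩ : ∃ m', m = m' + 1 :=
    ⟨m - 1, (Nat.succ_pred_eq_of_pos (Nat.pos_of_ne_zero hm0)).symm⟩
  have hbam : am < b am := hposb' am (by linarith) h2
  have hbam2 : b am < bp := by have := hmb h2; rwa [hbpfix] at this
  have hy₁eq : (⇑b)^[m' + 1] am = (⇑b)^[m'] (b am) := Function.iterate_succ_apply ⇑b m' am
  have hiterb := iter_ge b hmb (bm - 1) bp hbpfix hposb' m' (b am) (by linarith) hbam2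
  have hy₁gt : am < (⇑b)^[m' + 1] am := by rw [hy₁eq]; linarith [hiterb.1]
  have hy₁ltbp : (⇑b)^[m' + 1] am < bp := by rw [hy₁eq]; exact hiterb.2.2
  have hy₁lt : (⇑b)^[m' + 1] am < ap + 1 := by linarith
  obtain ⟨n, hn⟩ := reach a hma am (ap + 1) hap1 hposa hnofa ((⇑b)^[m' + 1] am)
    hy₁gt hy₁lt bm key1
  have hn0 : n ≠ 0 := by
    intro h0; rw [h0] at hn; simp only [Function.iterate_zero_apply] at hn; linarith
  obtain ⟨n', rfl⟩ : ∃ n', n = n' + 1 :=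
    ⟨n - 1, (Nat.succ_pred_eq_of_pos (Nat.pos_of_ne_zero hn0)).symm⟩
  have key : ∀ x, am ≤ x → x < am + 1 → x < (⇑a)^[n' + 1] ((⇑b)^[m' + 1] x) := by
    intro x hx1 hx2
    rcases lt_or_ge x bm with hxb | hxb
    · have hmono1 : (⇑b)^[m' + 1] am ≤ (⇑b)^[m' + 1] x := (hmb.monotone.iterate _) hx1
      have hmono2 : (⇑a)^[n' + 1] ((⇑b)^[m' + 1] am) ≤ (⇑a)^[n' + 1] ((⇑b)^[m' + 1] x) :=
        (hma.monotone.iterate _) hmono1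
      linarith
    · rcases lt_or_ge x (ap + 1) with hxa | hxa
      · have hbx : x ≤ (⇑b)^[m' + 1] x ∧ (⇑b)^[m' + 1] x < bp + 1 := by
          rcases eq_or_lt_of_le hxb with he | hlt'
          · have hfix : b x = x := he ▸ hbmfix
            rw [Function.iterate_fixed hfix]
            exact ⟨le_refl x, by linarith⟩
          · have h := iter_ge b hmb bm (bp + 1) hbp1 hposb (m' + 1) x hlt' (by linarith)
            exact ⟨h.1, h.2.2⟩
        rcases le_or_gt (ap + 1) ((⇑b)^[m' + 1] x) with hge | hlt2
        · have h := (hma.monotone.iterate (n' + 1)) hge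
          rw [Function.iterate_fixed hap1] at h
          linarith
        · have hmono : (⇑a)^[n' + 1] x ≤ (⇑a)^[n' + 1] ((⇑b)^[m' + 1] x) :=
            (hma.monotone.iterate _) hbx.1
          have hax : x < a x := hposa x (by linarith) hxa
          have hax2 : a x < ap + 1 := by have := hma hxa; rwa [hap1] at this
          have hiter := iter_ge a hma am (ap + 1) hap1 hposa n' (a x) (by linarith) hax2
          have heq : (⇑a)^[n' + 1] x = (⇑a)^[n'] (a x) := Function.iterate_succ_apply ⇑a n' x
          have := hiter.1
          linarith [heq ▸ hmono]
      · have hbge : (⇑b)^[m' + 1] (ap + 1) ≤ (⇑b)^[m' + 1] x := (hmb.monotone.iterate _) hxa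
        have hgt : am + 1 < (⇑b)^[m' + 1] x := lt_of_lt_of_le hm hbge
        have h := (hma.monotone.iterate (n' + 1)) (le_of_lt hgt)
        rw [Function.iterate_fixed ham1] at h
        linarith
  refine ⟨((n' + 1 : ℕ) : ℤ), ((m' + 1 : ℕ) : ℤ), fun x => ?_⟩
  have hfl1 : ((⌊x - am⌋ : ℤ) : ℝ) ≤ x - am := Int.floor_le _
  have hfl2 : x - am < (⌊x - am⌋ : ℤ) + 1 := Int.lt_floor_add_one _
  set k : ℤ := ⌊x - am⌋ with hk
  have hx1 : am ≤ x - (k : ℝ) := by linarith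
  have hx2 : x - (k : ℝ) < am + 1 := by linarith
  have hkey := key (x - (k : ℝ)) hx1 hx2
  have hcbm : CommT (⇑b)^[m' + 1] := commT_iterate hcb _
  have hcan : CommT (⇑a)^[n' + 1] := commT_iterate hca _
  have htr : (⇑a)^[n' + 1] ((⇑b)^[m' + 1] x) =
      (⇑a)^[n' + 1] ((⇑b)^[m' + 1] (x - (k : ℝ))) + (k : ℝ) := by
    have hx'' : x = (x - (k : ℝ)) + (k : ℝ) := by ring
    conv_lhs => rw [hx'']
    rw [commT_int hcbm (x - (k : ℝ)) k, commT_int hcan ((⇑b)^[m' + 1] (x - (k : ℝ))) k]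
  have hlt : x < (⇑a)^[n' + 1] ((⇑b)^[m' + 1] x) := by
    rw [htr]; linarith
  intro hEq
  rw [zpow_natCast, zpow_natCast, Equiv.Perm.coe_pow, Equiv.Perm.coe_pow] at hEq
  rw [hEq] at hlt
  exact lt_irrefl x hlt
end

section
/- Let G be a nonabelian subgroup of Homeo^ℤ(ℝ) acting minimally with every nontrivial fixed-point-having element hyperbolic-like. Then for any x, y ∈ [0,1) and any ε > 0, there exists a hyperbolic-like g ∈ G with a repelling fixed point g₋ and attracting fixed point g₊ satisfying |g₋ − x| < ε and |g₊ − y| < ε. -/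
open Filter Topology Set

theorem Equiv.Perm.apply_inv_self {α : Type*} (f : Equiv.Perm α) (x : α) : f (f⁻¹ x) = x :=
  f.apply_symm_apply x

theorem Equiv.Perm.inv_apply_self {α : Type*} (f : Equiv.Perm α) (x : α) : f⁻¹ (f x) = x :=
  f.symm_apply_apply x

namespace Stmt12Proof

lemma commT_int {f : ℝ → ℝ} (hf : CommT f) : ∀ (x : ℝ) (k : ℤ), f (x + k) = f x + k := by
  have hsub : ∀ x : ℝ, f (x - 1) = f x - 1 := by
    intro x
    have := hf (x - 1); simp at this; linarith
  intro x k
  induction k using Int.induction_on with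
  | zero => simp
  | succ n ih =>
      have := hf (x + n)
      push_cast
      push_cast at ih
      rw [← add_assoc, this, ih]; ring
  | pred n ih =>
      have := hsub (x + (-(n:ℝ)))
      push_cast
      push_cast at ih
      push_cast at this
      have h2 : x + (-(n:ℝ) - 1) = x + -(n:ℝ) - 1 := by ring
      rw [h2, this, ih]; ring

lemma commT_iterate {f : ℝ → ℝ} (hf : CommT f) (n : ℕ) : CommT f^[n] := by
  induction n with
  | zero => intro x; simp
  | succ n ih =>
      intro x
      rw [Function.iterate_succ_apply', Function.iterate_succ_apply', ih x, hf]

lemma commT_inv (g : Equiv.Perm ℝ) (hg : CommT g) : CommT ⇑g⁻¹ := by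
  intro x
  have h1 : g (g⁻¹ x + 1) = x + 1 := by rw [hg]; simp
  have h2 := congrArg (⇑g⁻¹) h1
  rw [Equiv.Perm.inv_apply_self] at h2
  rw [← h2]

lemma commT_mul (a b : Equiv.Perm ℝ) (ha : CommT a) (hb : CommT b) : CommT ⇑(a * b) := by
  intro x; simp only [Equiv.Perm.mul_apply, hb x, ha (b x)]

lemma strictMono_inv (g : Equiv.Perm ℝ) (h : StrictMono g) : StrictMono ⇑g⁻¹ := by
  intro a b hab
  rw [← h.lt_iff_lt]
  simpa using hab

lemma continuous_of_sm (f : ℝ → ℝ) (h : StrictMono f) (hs : Function.Surjective f) :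
    Continuous f := (StrictMono.orderIsoOfSurjective f h hs).continuous

lemma perm_continuous (g : Equiv.Perm ℝ) (h : StrictMono g) : Continuous ⇑g :=
  continuous_of_sm g h g.surjective

lemma perm_inv_continuous (g : Equiv.Perm ℝ) (h : StrictMono g) : Continuous ⇑g⁻¹ :=
  continuous_of_sm _ (strictMono_inv g h) (g⁻¹).surjective


section Holder

variable (G : Subgroup (Equiv.Perm ℝ))
variable (hhomeo : ∀ g ∈ G, StrictMono g ∧ CommT g)
include hhomeo

/-- Trichotomy under freeness. -/
lemma trich (HF : ∀ g ∈ G, (∃ x : ℝ, g x = x) → g = 1)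
    (g : Equiv.Perm ℝ) (hg : g ∈ G) :
    g = 1 ∨ (∀ x : ℝ, x < g x) ∨ (∀ x : ℝ, g x < x) := by
  by_cases hfix : ∃ x : ℝ, g x = x
  · exact Or.inl (HF g hg hfix)
  · push_neg at hfix
    have hc : Continuous (fun x : ℝ => g x - x) :=
      (perm_continuous g (hhomeo g hg).1).sub continuous_id
    by_cases hpos : ∀ x : ℝ, x < g x
    · exact Or.inr (Or.inl hpos)
    · push_neg at hpos
      obtain ⟨b, hb⟩ := hpos
      have hb' : g b - b < 0 := lt_of_le_of_ne (by linarith) (fun h => hfix b (by linarith))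
      refine Or.inr (Or.inr ?_)
      intro x
      by_contra hx
      push_neg at hx
      have hx' : 0 < g x - x := lt_of_le_of_ne (by linarith) (fun h => hfix x (by linarith))
      have h0 : (0:ℝ) ∈ uIcc (g b - b) (g x - x) := by
        rw [Set.mem_uIcc]; left; constructor <;> linarith
      obtain ⟨z, _, hz⟩ := intermediate_value_uIcc (hc.continuousOn) h0
      exact hfix z (by dsimp at hz; linarith)

lemma pos_displacement (g : Equiv.Perm ℝ) (hg : g ∈ G) (hpos : ∀ x : ℝ, x < g x) :
    ∃ δ > 0, ∀ x : ℝ, x + δ ≤ g x := by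
  have hc : Continuous (fun x : ℝ => g x - x) :=
    (perm_continuous g (hhomeo g hg).1).sub continuous_id
  obtain ⟨x₀, hx₀, hmin⟩ := isCompact_Icc.exists_isMinOn (⟨0, by norm_num⟩ : (Icc (0:ℝ) 1).Nonempty)
    hc.continuousOn
  refine ⟨g x₀ - x₀, by have := hpos x₀; linarith, fun x => ?_⟩
  have hfr : Int.fract x ∈ Icc (0:ℝ) 1 := ⟨Int.fract_nonneg x, (Int.fract_lt_one x).le⟩
  have hm := hmin hfr
  dsimp at hm
  have hx : x = Int.fract x + (⌊x⌋ : ℤ) := by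
    have : Int.fract x = x - ⌊x⌋ := rfl
    push_cast; linarith [this]
  have hgx : g x = g (Int.fract x) + (⌊x⌋ : ℤ) := by
    conv_lhs => rw [hx]
    exact commT_int (hhomeo g hg).2 _ _
  have hkey : g x - x = g (Int.fract x) - Int.fract x := by rw [hgx]; linarith [hx]
  linarith

omit hhomeo in
lemma iter_lower (g : Equiv.Perm ℝ) (δ : ℝ) (h : ∀ x : ℝ, x + δ ≤ g x) (n : ℕ) :
    (n : ℝ) * δ ≤ (⇑g)^[n] 0 := by
  induction n with
  | zero => simp
  | succ n ih =>
      rw [Function.iterate_succ_apply']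
      have := h ((⇑g)^[n] 0)
      push_cast
      nlinarith [this, ih]

lemma compare (HF : ∀ g ∈ G, (∃ x : ℝ, g x = x) → g = 1)
    (a b : Equiv.Perm ℝ) (ha : a ∈ G) (hb : b ∈ G) :
    (∀ x : ℝ, a x ≤ b x) ∨ (∀ x : ℝ, b x < a x) := by
  rcases trich G hhomeo HF (a⁻¹ * b) (mul_mem (inv_mem ha) hb) with h | h | h
  · left
    intro x
    have : a⁻¹ * b = 1 := h
    have hb' : b = a := by
      have := congrArg (fun t => a * t) this
      simpa [mul_assoc] using this
    rw [hb']
  · left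
    intro x
    have hx := h x
    have := (hhomeo a ha).1 hx
    simpa using this.le
  · right
    intro x
    have hx := h x
    have := (hhomeo a ha).1 hx
    simpa using this

/-- Case (i) of Hölder: a positive square-root of the "commutator" leads to a contradiction. -/
lemma core_case1 (HF : ∀ g ∈ G, (∃ x : ℝ, g x = x) → g = 1)
    {a b : Equiv.Perm ℝ} (ha : a ∈ G) (hb : b ∈ G)
    (hpa : ∀ x : ℝ, x < a x) (hpb : ∀ x : ℝ, x < b x)
    (ε : Equiv.Perm ℝ) (hεG : ε ∈ G) (hεpos : ∀ x : ℝ, x < ε x)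
    (hεsq : ∀ x : ℝ, ε (ε x) ≤ ((a*b)*(b*a)⁻¹) x) : False := by
  classical
  obtain ⟨δ, hδ, hdisp⟩ := pos_displacement G hhomeo ε hεG hεpos
  have hmono : ∀ n : ℕ, StrictMono (⇑ε)^[n] := fun n => ((hhomeo ε hεG).1).iterate n
  -- greatest exponent for a map f
  have key : ∀ f : Equiv.Perm ℝ, f ∈ G → (∀ x : ℝ, x < f x) →
      ∃ M : ℕ, (∀ x : ℝ, (⇑ε)^[M] x ≤ f x) ∧ (∀ x : ℝ, f x < (⇑ε)^[M+1] x) := by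
    intro f hfG hpf
    obtain ⟨N, hN⟩ := exists_nat_gt (f 0 / δ)
    have hNδ : f 0 < N * δ := by
      rw [div_lt_iff₀ hδ] at hN; linarith
    set P : ℕ → Prop := fun j => ∀ x : ℝ, (⇑ε)^[j] x ≤ f x with hP
    have hP0 : P 0 := fun x => by simpa using (hpf x).le
    have hPN : ¬ P N := by
      intro hPN
      have h1 := hPN 0
      have h2 := iter_lower ε δ hdisp N
      linarith
    set M := Nat.findGreatest P N with hM
    have hPM : P M := Nat.findGreatest_spec (Nat.zero_le N) hP0
    have hMlt : M < N := lt_of_le_of_ne (Nat.findGreatest_le N) (fun h => hPN (h ▸ hPM))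
    have hnot : ¬ P (M+1) := Nat.findGreatest_is_greatest (Nat.lt_succ_self M) hMlt
    refine ⟨M, hPM, ?_⟩
    have hpow : ((ε^(M+1) : Equiv.Perm ℝ) : ℝ → ℝ) = (⇑ε)^[M+1] := Equiv.Perm.coe_pow ε (M+1)
    rcases compare G hhomeo HF (ε^(M+1)) f (pow_mem hεG (M+1)) hfG with h | h
    · exact absurd (fun x => by rw [← hpow]; exact h x) hnot
    · intro x; rw [← hpow]; exact h x
  obtain ⟨M, haM, haM'⟩ := key a ha hpa
  obtain ⟨K, hbK, hbK'⟩ := key b hb hpb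
  set z := (b*a)⁻¹ 0 with hz
  have hz0 : b (a z) = 0 := by
    have : (b*a) z = 0 := by rw [hz]; exact (b*a).apply_inv_self 0
    simpa [Equiv.Perm.mul_apply] using this
  have hc0 : ((a*b)*(b*a)⁻¹) 0 = a (b z) := by
    simp [Equiv.Perm.mul_apply, hz]
  -- upper bound
  have hup : a (b z) < (⇑ε)^[M+1+(K+1)] z := by
    calc a (b z) < (⇑ε)^[M+1] (b z) := haM' _
    _ < (⇑ε)^[M+1] ((⇑ε)^[K+1] z) := (hmono (M+1)) (hbK' z)
    _ = (⇑ε)^[M+1+(K+1)] z := (Function.iterate_add_apply _ _ _ _).symm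
  -- lower bound
  have hlow : (⇑ε)^[K+M] z ≤ 0 := by
    calc (⇑ε)^[K+M] z = (⇑ε)^[K] ((⇑ε)^[M] z) := Function.iterate_add_apply _ _ _ _
    _ ≤ (⇑ε)^[K] (a z) := ((hmono K).monotone) (haM z)
    _ ≤ b (a z) := hbK _
    _ = 0 := hz0
  have hsq0 : (⇑ε)^[2] 0 ≤ ((a*b)*(b*a)⁻¹) 0 := by
    have := hεsq 0
    simpa [Function.iterate_succ_apply'] using this
  have hfin : (⇑ε)^[2+(K+M)] z ≤ (⇑ε)^[2] 0 := by
    rw [Function.iterate_add_apply]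
    exact ((hmono 2).monotone) hlow
  have heq : 2+(K+M) = M+1+(K+1) := by ring
  rw [heq] at hfin
  rw [hc0] at hsq0
  linarith

/-- Case (ii) plus assembly: positive noncommuting pair leads to commutation. -/
lemma comm_aux (HF : ∀ g ∈ G, (∃ x : ℝ, g x = x) → g = 1)
    {a b : Equiv.Perm ℝ} (ha : a ∈ G) (hb : b ∈ G)
    (hpa : ∀ x : ℝ, x < a x) (hpb : ∀ x : ℝ, x < b x)
    (hpc : ∀ x : ℝ, x < ((a*b)*(b*a)⁻¹) x) : a * b = b * a := by
  classical
  set c := (a*b)*(b*a)⁻¹ with hcdef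
  have hcG : c ∈ G := mul_mem (mul_mem ha hb) (inv_mem (mul_mem hb ha))
  by_cases hex : ∃ ε : Equiv.Perm ℝ, ε ∈ G ∧ (∀ x : ℝ, x < ε x) ∧ (∀ x : ℝ, ε (ε x) ≤ c x)
  · exfalso
    obtain ⟨ε, h1, h2, h3⟩ := hex
    exact core_case1 G hhomeo HF ha hb hpa hpb ε h1 h2 h3
  · push_neg at hex
    -- c is the least positive element
    have hleast : ∀ h : Equiv.Perm ℝ, h ∈ G → (∀ x : ℝ, x < h x) → ∀ x : ℝ, c x ≤ h x := by
      intro h hG hp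
      by_contra hcon
      push_neg at hcon
      obtain ⟨x₁, hx₁⟩ := hcon
      rcases compare G hhomeo HF c h hcG hG with H | H
      · exact absurd (H x₁) (not_le_of_gt hx₁)
      · -- h < c everywhere; consider δ' = h⁻¹ * c
        have hmono := (hhomeo h hG).1
        have hmonoinv := strictMono_inv h hmono
        have hδ'G : h⁻¹ * c ∈ G := mul_mem (inv_mem hG) hcG
        have hδ'pos : ∀ x : ℝ, x < (h⁻¹ * c) x := by
          intro x
          have := hmonoinv (H x)
          simpa [Equiv.Perm.mul_apply] using this
        -- c < h ∘ h pointwise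
        obtain ⟨x₂, hx₂⟩ := hex h hG hp
        have Hc : ∀ x : ℝ, c x < h (h x) := by
          rcases compare G hhomeo HF (h*h) c (mul_mem hG hG) hcG with H2 | H2
          · have := H2 x₂
            simp only [Equiv.Perm.mul_apply] at this
            linarith
          · intro x; have := H2 x; simpa [Equiv.Perm.mul_apply] using this
        have hsq : ∀ x : ℝ, (h⁻¹ * c) ((h⁻¹ * c) x) < c x := by
          intro x
          have h1 : c (h⁻¹ (c x)) < h (h (h⁻¹ (c x))) := Hc _
          rw [h.apply_inv_self] at h1
          have h2 := hmonoinv h1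
          rw [h.inv_apply_self] at h2
          simpa [Equiv.Perm.mul_apply] using h2
        obtain ⟨x₃, hx₃⟩ := hex (h⁻¹ * c) hδ'G hδ'pos
        exact absurd (hsq x₃) (not_lt_of_gt hx₃)
    -- displacement of c
    obtain ⟨δ, hδ, hdisp⟩ := pos_displacement G hhomeo c hcG hpc
    -- every positive element is a power of c
    have repr : ∀ f : Equiv.Perm ℝ, f ∈ G → (∀ x : ℝ, x < f x) → ∃ m : ℕ, f = c ^ m := by
      intro f hfG hpf
      obtain ⟨N, hN⟩ := exists_nat_gt (f 0 / δ)
      have hNδ : f 0 < N * δ := by rw [div_lt_iff₀ hδ] at hN; linarith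
      set P : ℕ → Prop := fun j => ∀ x : ℝ, (⇑c)^[j] x ≤ f x with hP
      have hP0 : P 0 := fun x => by simpa using (hpf x).le
      have hPN : ¬ P N := by
        intro hPN
        have h1 := hPN 0
        have h2 := iter_lower c δ hdisp N
        linarith
      set M := Nat.findGreatest P N with hM
      have hPM : P M := Nat.findGreatest_spec (Nat.zero_le N) hP0
      have hMlt : M < N := lt_of_le_of_ne (Nat.findGreatest_le N) (fun h => hPN (h ▸ hPM))
      have hnot : ¬ P (M+1) := Nat.findGreatest_is_greatest (Nat.lt_succ_self M) hMlt
      have hpow : ∀ j : ℕ, ((c^j : Equiv.Perm ℝ) : ℝ → ℝ) = (⇑c)^[j] := fun j => Equiv.Perm.coe_pow c j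
      have hstrict : ∀ x : ℝ, f x < (c^(M+1)) x := by
        rcases compare G hhomeo HF (c^(M+1)) f (pow_mem hcG (M+1)) hfG with h | h
        · exact absurd (fun x => by rw [← hpow (M+1)]; exact h x) hnot
        · exact h
      set w := (c^M)⁻¹ * f with hw
      have hwG : w ∈ G := mul_mem (inv_mem (pow_mem hcG M)) hfG
      have hcMinv := strictMono_inv (c^M) (by rw [show (⇑(c^M) : ℝ → ℝ) = (⇑c)^[M] from hpow M]; exact ((hhomeo c hcG).1).iterate M)
      have hwge : ∀ x : ℝ, x ≤ w x := by
        intro x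
        have h1 : (c^M) x ≤ f x := by rw [show (⇑(c^M) : ℝ → ℝ) = (⇑c)^[M] from hpow M]; exact hPM x
        have := hcMinv.monotone h1
        rw [(c^M).inv_apply_self] at this
        simpa [hw, Equiv.Perm.mul_apply] using this
      have hwlt : ∀ x : ℝ, w x < c x := by
        intro x
        have h1 : f x < (c^M) (c x) := by
          have := hstrict x
          rw [pow_succ] at this
          simpa [Equiv.Perm.mul_apply] using this
        have := hcMinv h1
        rw [(c^M).inv_apply_self] at this
        simpa [hw, Equiv.Perm.mul_apply] using this
      by_cases hw1 : w = 1
      · refine ⟨M, ?_⟩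
        have : (c^M)⁻¹ * f = 1 := hw1
        have := congrArg (fun t => (c^M) * t) this
        simpa [mul_assoc] using this
      · exfalso
        rcases trich G hhomeo HF w hwG with h | h | h
        · exact hw1 h
        · exact absurd (hwlt 0) (not_lt_of_ge (hleast w hwG h 0))
        · exact absurd (hwge 0) (not_le_of_gt (h 0))
    obtain ⟨m, hm⟩ := repr a ha hpa
    obtain ⟨n, hn⟩ := repr b hb hpb
    rw [hm, hn]
    exact pow_mul_comm c m n

lemma comm_of_pos_left (HF : ∀ g ∈ G, (∃ x : ℝ, g x = x) → g = 1)
    {a b : Equiv.Perm ℝ} (ha : a ∈ G) (hb : b ∈ G)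
    (hpa : ∀ x : ℝ, x < a x) (hpb : ∀ x : ℝ, x < b x) : a * b = b * a := by
  set c := (a*b)*(b*a)⁻¹ with hcdef
  have hcG : c ∈ G := mul_mem (mul_mem ha hb) (inv_mem (mul_mem hb ha))
  rcases trich G hhomeo HF c hcG with h | h | h
  · have : a * b = b * a := by
      have := h
      rw [hcdef] at this
      exact mul_inv_eq_one.mp this
    exact this
  · exact comm_aux G hhomeo HF ha hb hpa hpb h
  · have hpc' : ∀ x : ℝ, x < ((b*a)*(a*b)⁻¹) x := by
      intro x
      have hceq : ((b*a)*(a*b)⁻¹ : Equiv.Perm ℝ) = c⁻¹ := by rw [hcdef]; group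
      rw [hceq]
      have := h (c⁻¹ x)
      rw [c.apply_inv_self] at this
      exact this
    exact (comm_aux G hhomeo HF hb ha hpb hpa hpc').symm

lemma free_implies_comm (HF : ∀ g ∈ G, (∃ x : ℝ, g x = x) → g = 1)
    {a b : Equiv.Perm ℝ} (ha : a ∈ G) (hb : b ∈ G) : a * b = b * a := by
  have hinv : ∀ g : Equiv.Perm ℝ, g ∈ G → (∀ x : ℝ, g x < x) → (∀ x : ℝ, x < g⁻¹ x) := by
    intro g hg h x
    have := h (g⁻¹ x)
    rw [g.apply_inv_self] at this
    exact this
  have swap_inv_left : ∀ {u v : Equiv.Perm ℝ}, u⁻¹ * v = v * u⁻¹ → u * v = v * u := by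
    intro u v h
    calc u * v = u * (v * u⁻¹) * u := by group
    _ = u * (u⁻¹ * v) * u := by rw [h]
    _ = v * u := by group
  rcases trich G hhomeo HF a ha with h1 | h1 | h1
  · rw [h1]; group
  · rcases trich G hhomeo HF b hb with h2 | h2 | h2
    · rw [h2]; group
    · exact comm_of_pos_left G hhomeo HF ha hb h1 h2
    · have hc := comm_of_pos_left G hhomeo HF ha (inv_mem hb) h1 (hinv b hb h2)
      have := swap_inv_left hc.symm
      exact this.symm
  · rcases trich G hhomeo HF b hb with h2 | h2 | h2
    · rw [h2]; group
    · have hc := comm_of_pos_left G hhomeo HF (inv_mem ha) hb (hinv a ha h1) h2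
      exact swap_inv_left hc
    · have hc := comm_of_pos_left G hhomeo HF (inv_mem ha) (inv_mem hb) (hinv a ha h1) (hinv b hb h2)
      have s1 := swap_inv_left hc
      have := swap_inv_left s1.symm
      exact this.symm

lemma exists_hyperbolic
    (hnonab : ∃ a ∈ G, ∃ b ∈ G, a * b ≠ b * a)
    (hhyp : ∀ g ∈ G, g ≠ 1 → (∃ x : ℝ, g x = x) → HyperbolicLike g) :
    ∃ g ∈ G, g ≠ 1 ∧ HyperbolicLike g := by
  by_cases HF : ∀ g ∈ G, (∃ x : ℝ, g x = x) → g = 1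
  · obtain ⟨a, ha, b, hb, hab⟩ := hnonab
    exact absurd (free_implies_comm G hhomeo HF ha hb) hab
  · push_neg at HF
    obtain ⟨g, hg, hfix, hne⟩ := HF
    exact ⟨g, hg, hne, hhyp g hg hne hfix⟩

end Holder


section NS

/-- limit of iterates is a fixed point -/
lemma fixed_of_tendsto_iterate {g : ℝ → ℝ} (hg : Continuous g) {w L : ℝ}
    (h : Tendsto (fun n => g^[n] w) atTop (𝓝 L)) : g L = L := by
  have h1 : Tendsto (fun n => g (g^[n] w)) atTop (𝓝 (g L)) := (hg.tendsto L).comp h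
  have h2 : Tendsto (fun n => g^[n+1] w) atTop (𝓝 L) :=
    h.comp (tendsto_add_atTop_nat 1)
  have h3 : (fun n => g^[n+1] w) = fun n => g (g^[n] w) := by
    funext n; rw [Function.iterate_succ_apply']
  rw [h3] at h2
  exact tendsto_nhds_unique h1 h2

/-- sign constancy on an interval with no fixed points -/
lemma sign_const {g : ℝ → ℝ} (hg : Continuous g) {α β : ℝ}
    (hfree : ∀ z : ℝ, α < z → z < β → g z ≠ z) :
    (∀ z : ℝ, α < z → z < β → z < g z) ∨ (∀ z : ℝ, α < z → z < β → g z < z) := by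
  by_cases hpos : ∀ z : ℝ, α < z → z < β → z < g z
  · exact Or.inl hpos
  · push_neg at hpos
    obtain ⟨z₀, hz₀α, hz₀β, hz₀⟩ := hpos
    have hz₀' : g z₀ < z₀ := lt_of_le_of_ne hz₀ (hfree z₀ hz₀α hz₀β)
    refine Or.inr (fun z hzα hzβ => ?_)
    by_contra hz
    push_neg at hz
    have hz' : z < g z := lt_of_le_of_ne hz (fun h => hfree z hzα hzβ h.symm)
    have hc : Continuous (fun x : ℝ => g x - x) := hg.sub continuous_id
    have h0 : (0:ℝ) ∈ uIcc (g z₀ - z₀) (g z - z) := by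
      rw [Set.mem_uIcc]; left; constructor <;> linarith
    obtain ⟨y, hy, hy0⟩ := intermediate_value_uIcc hc.continuousOn h0
    have hyi : y ∈ uIcc z₀ z := hy
    have h1 : α < y ∧ y < β := by
      rw [Set.mem_uIcc] at hyi
      rcases hyi with ⟨h, h'⟩ | ⟨h, h'⟩ <;> constructor <;> linarith
    exact hfree y h1.1 h1.2 (by dsimp at hy0; linarith)

/-- North-south data: `g` has fixed points exactly at `r + ℤ` and `a + ℤ`, with
attraction at `a`. -/
structure NSData (g : ℝ → ℝ) (r a : ℝ) : Prop where
  mono : StrictMono g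
  cont : Continuous g
  commT : CommT g
  fixr : g r = r
  fixa : g a = a
  hra : r < a
  hra2 : a < r + 1
  fixset : ∀ z : ℝ, g z = z → ∃ k : ℤ, z = r + k ∨ z = a + k
  attr : ∃ ε > 0, ∀ w : ℝ, |w - a| < ε → Tendsto (fun n => g^[n] w) atTop (𝓝 a)

namespace NSData

variable {g : ℝ → ℝ} {r a : ℝ} (D : NSData g r a)
include D

lemma fixr1 : g (r + 1) = r + 1 := by rw [D.commT r, D.fixr]

lemma interior_fix {z : ℝ} (hz1 : r < z) (hz2 : z < r + 1) (hfix : g z = z) : z = a := by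
  obtain ⟨k, hk | hk⟩ := D.fixset z hfix
  · exfalso
    have h1 : (0:ℝ) < k := by linarith
    have h2 : (k:ℝ) < 1 := by linarith
    have h1' : (0:ℤ) < k := by exact_mod_cast h1
    have h2' : k < 1 := by exact_mod_cast h2
    omega
  · have h1 : (-1:ℝ) < k := by linarith [D.hra, D.hra2]
    have h2 : (k:ℝ) < 1 := by linarith [D.hra, D.hra2]
    have h1' : (-1:ℤ) < k := by exact_mod_cast h1
    have h2' : k < 1 := by exact_mod_cast h2
    have : k = 0 := by omega
    rw [this] at hk; simpa using hk

lemma sign_left : ∀ z : ℝ, r < z → z < a → z < g z := by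
  have hfree : ∀ z : ℝ, r < z → z < a → g z ≠ z := by
    intro z h1 h2 hfix
    have := D.interior_fix h1 (by linarith [D.hra2]) hfix
    linarith
  rcases sign_const D.cont hfree with h | h
  · exact h
  · exfalso
    obtain ⟨ε, hε, hattr⟩ := D.attr
    set w := (max r (a - ε) + a) / 2 with hw
    have hw1 : r < w := by
      have : max r (a - ε) ≥ r := le_max_left _ _
      have : max r (a-ε) < a := max_lt D.hra (by linarith)
      have := le_max_left r (a-ε)
      simp only [hw]; linarith
    have hw2 : w < a := by
      have : max r (a-ε) < a := max_lt D.hra (by linarith)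
      simp only [hw]; linarith
    have hwε : |w - a| < ε := by
      have : max r (a-ε) ≥ a - ε := le_max_right _ _
      rw [abs_lt]; constructor <;> simp only [hw] <;> [linarith; linarith]
    -- iterates stay ≤ w
    have hinv : ∀ n : ℕ, r < g^[n] w ∧ g^[n] w ≤ w := by
      intro n
      induction n with
      | zero => exact ⟨hw1, le_refl _⟩
      | succ n ih =>
          rw [Function.iterate_succ_apply']
          constructor
          · have := D.mono ih.1
            rw [D.fixr] at this; linarith
          · have hlt : g (g^[n] w) < g^[n] w := h _ ih.1 (lt_of_le_of_lt ih.2 hw2)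
            linarith [ih.2]
    have htend := hattr w hwε
    have hev := htend.eventually (eventually_gt_nhds (show w < a from hw2))
    obtain ⟨n, hn⟩ := hev.exists
    exact absurd hn (not_lt_of_ge (hinv n).2)

lemma sign_right : ∀ z : ℝ, a < z → z < r + 1 → g z < z := by
  have hfree : ∀ z : ℝ, a < z → z < r + 1 → g z ≠ z := by
    intro z h1 h2 hfix
    have := D.interior_fix (by linarith [D.hra]) h2 hfix
    linarith
  rcases sign_const D.cont hfree with h | h
  swap
  · exact h
  · exfalso
    obtain ⟨ε, hε, hattr⟩ := D.attr
    set w := (min (r+1) (a + ε) + a) / 2 with hw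
    have hmin : a < min (r+1) (a+ε) := lt_min D.hra2 (by linarith)
    have hw1 : w < r + 1 := by
      have := min_le_left (r+1) (a+ε)
      simp only [hw]; linarith
    have hw2 : a < w := by simp only [hw]; linarith
    have hwε : |w - a| < ε := by
      have := min_le_right (r+1) (a+ε)
      rw [abs_lt]; constructor <;> simp only [hw] <;> [linarith; linarith]
    have hinv : ∀ n : ℕ, g^[n] w < r + 1 ∧ w ≤ g^[n] w := by
      intro n
      induction n with
      | zero => exact ⟨hw1, le_refl _⟩
      | succ n ih =>
          rw [Function.iterate_succ_apply']
          constructor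
          · have := D.mono ih.1
            rw [D.fixr1] at this; linarith
          · have hlt : g^[n] w < g (g^[n] w) := h _ (lt_of_lt_of_le hw2 ih.2) ih.1
            linarith [ih.2]
    have htend := hattr w hwε
    have hev := htend.eventually (eventually_lt_nhds (show a < w from hw2))
    obtain ⟨n, hn⟩ := hev.exists
    exact absurd hn (not_lt_of_ge (hinv n).2)

/-- all interior points converge to `a` under iteration -/
lemma tendsto_interior {w : ℝ} (hw1 : r < w) (hw2 : w < r + 1) :
    Tendsto (fun n => g^[n] w) atTop (𝓝 a) := by
  rcases lt_trichotomy w a with hwa | hwa | hwa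
  · -- increasing iterates
    have hinv : ∀ n : ℕ, r < g^[n] w ∧ g^[n] w < a := by
      intro n
      induction n with
      | zero => exact ⟨hw1, hwa⟩
      | succ n ih =>
          rw [Function.iterate_succ_apply']
          constructor
          · have := D.mono ih.1; rw [D.fixr] at this; linarith
          · have := D.mono ih.2; rw [D.fixa] at this; linarith
    have hmono : Monotone (fun n => g^[n] w) := by
      apply monotone_nat_of_le_succ
      intro n
      rw [Function.iterate_succ_apply']
      exact (D.sign_left _ (hinv n).1 (hinv n).2).le
    have hbdd : BddAbove (Set.range (fun n => g^[n] w)) := by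
      refine ⟨a, ?_⟩
      rintro z ⟨n, rfl⟩
      exact (hinv n).2.le
    have htend := tendsto_atTop_ciSup hmono hbdd
    set L := ⨆ n, g^[n] w with hL
    have hfix : g L = L := fixed_of_tendsto_iterate D.cont htend
    have hwL : w ≤ L := le_ciSup hbdd 0
    have hLa : L ≤ a := ciSup_le (fun n => (hinv n).2.le)
    have : L = a := by
      rcases eq_or_lt_of_le hLa with h | h
      · exact h
      · exact D.interior_fix (by linarith) (by linarith [D.hra2]) hfix
    rwa [this] at htend
  · subst hwa
    have : (fun n => g^[n] w) = fun _ => w := by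
      funext n
      induction n with
      | zero => simp
      | succ n ih => rw [Function.iterate_succ_apply', ih, D.fixa]
    rw [this]
    exact tendsto_const_nhds
  · -- decreasing iterates
    have hinv : ∀ n : ℕ, a < g^[n] w ∧ g^[n] w < r + 1 := by
      intro n
      induction n with
      | zero => exact ⟨hwa, hw2⟩
      | succ n ih =>
          rw [Function.iterate_succ_apply']
          constructor
          · have := D.mono ih.1; rw [D.fixa] at this; linarith
          · have := D.mono ih.2; rw [D.fixr1] at this; linarith
    have hmono : Antitone (fun n => g^[n] w) := by
      apply antitone_nat_of_succ_le
      intro n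
      rw [Function.iterate_succ_apply']
      exact (D.sign_right _ (hinv n).1 (hinv n).2).le
    have hbdd : BddBelow (Set.range (fun n => g^[n] w)) := by
      refine ⟨a, ?_⟩
      rintro z ⟨n, rfl⟩
      exact (hinv n).1.le
    have htend := tendsto_atTop_ciInf hmono hbdd
    set L := ⨅ n, g^[n] w with hL
    have hfix : g L = L := fixed_of_tendsto_iterate D.cont htend
    have hwL : L ≤ w := ciInf_le hbdd 0
    have hLa : a ≤ L := le_ciInf (fun n => (hinv n).1.le)
    have : L = a := by
      rcases eq_or_lt_of_le hLa with h | h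
      · exact h.symm
      · exact D.interior_fix (by linarith [D.hra]) (by linarith) hfix
    rwa [this] at htend

/-- uniform contraction of the middle part of the fundamental interval -/
lemma uniform {μ η : ℝ} (hμ : 0 < μ) (hμ2 : μ < 1/2) (hη : 0 < η) :
    ∃ N : ℕ, ∀ n ≥ N, ∀ w : ℝ, r + μ ≤ w → w ≤ r + 1 - μ →
      a - η < g^[n] w ∧ g^[n] w < a + η := by
  have h1 : Tendsto (fun n => g^[n] (r+μ)) atTop (𝓝 a) :=
    D.tendsto_interior (by linarith) (by linarith)
  have h2 : Tendsto (fun n => g^[n] (r+1-μ)) atTop (𝓝 a) :=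
    D.tendsto_interior (by linarith) (by linarith)
  have e1 := (h1.eventually (eventually_gt_nhds (show a - η < a by linarith))).and
    ((h2.eventually (eventually_lt_nhds (show a < a + η by linarith))))
  rw [eventually_atTop] at e1
  obtain ⟨N, hN⟩ := e1
  refine ⟨N, fun n hn w hw1 hw2 => ?_⟩
  obtain ⟨ha1, ha2⟩ := hN n hn
  have hm1 : g^[n] (r+μ) ≤ g^[n] w := (D.mono.iterate n).monotone hw1
  have hm2 : g^[n] w ≤ g^[n] (r+1-μ) := (D.mono.iterate n).monotone hw2
  exact ⟨by linarith, by linarith⟩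

lemma iterate_int (n : ℕ) (x : ℝ) (k : ℤ) : g^[n] (x + k) = g^[n] x + k :=
  commT_int (commT_iterate D.commT n) x k

/-- saturated global version -/
lemma saturated {μ η : ℝ} (hμ : 0 < μ) (hμ2 : μ < 1/2) (hη : 0 < η) :
    ∃ N : ℕ, ∀ n ≥ N, ∀ z : ℝ, (∀ k : ℤ, ¬ |z - (r + k)| < μ) →
      ∃ k : ℤ, |g^[n] z - (a + k)| < η := by
  obtain ⟨N, hN⟩ := D.uniform hμ hμ2 hη
  refine ⟨N, fun n hn z hz => ?_⟩
  set k := ⌊z - r⌋ with hk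
  have hfr1 : 0 ≤ z - r - k := by
    have := Int.floor_le (z - r); simp only [hk]; linarith
  have hfr2 : z - r - k < 1 := by
    have := Int.lt_floor_add_one (z - r); simp only [hk]; linarith
  have hc1 := hz k
  have hc2 := hz (k+1)
  rw [abs_lt, not_and_or, not_lt, not_lt] at hc1 hc2
  push_cast at hc2
  have hw1 : r + μ ≤ z - k := by
    rcases hc1 with h | h
    · linarith
    · linarith
  have hw2 : z - k ≤ r + 1 - μ := by
    rcases hc2 with h | h
    · linarith
    · linarith
  obtain ⟨hl, hr'⟩ := hN n hn (z - k) hw1 hw2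
  refine ⟨k, ?_⟩
  have : g^[n] (z - k) + k = g^[n] z := by
    have := D.iterate_int n (z - k) k
    simp at this
    rw [← this]
  rw [abs_lt]
  constructor <;> linarith [this]

end NSData

end NS


section Transport

lemma attr_translate {f : ℝ → ℝ} (hf : CommT f) {p : ℝ}
    (h : IsAttractingFixedPt f p) (k : ℤ) : IsAttractingFixedPt f (p + k) := by
  obtain ⟨hfix, ε, hε, hconv⟩ := h
  refine ⟨by rw [commT_int hf p k, hfix], ε, hε, fun y hy => ?_⟩
  have hy' : |y - k - p| < ε := by
    rw [abs_lt] at hy ⊢; push_cast at hy ⊢; constructor <;> linarith [hy.1, hy.2]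
  have ht := hconv (y - k) hy'
  have heq : ∀ n : ℕ, f^[n] y = f^[n] (y - k) + k := by
    intro n
    have h2 := commT_int (commT_iterate hf n) (y - k) k
    have h3 : y - (k:ℝ) + (k:ℝ) = y := by ring
    rw [h3] at h2
    exact h2
  have := ht.add_const (k:ℝ)
  simp only [← heq] at this
  exact this

lemma attr_conj (h g : Equiv.Perm ℝ) (hmono : StrictMono h) {p : ℝ}
    (hattr : IsAttractingFixedPt (⇑g) p) : IsAttractingFixedPt (⇑(h*g*h⁻¹)) (h p) := by
  obtain ⟨hfix, ε, hε, hconv⟩ := hattr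
  have hcont := perm_continuous h hmono
  have hcont' := perm_inv_continuous h hmono
  have happ : ∀ (n : ℕ) (x : ℝ), (⇑(h*g*h⁻¹))^[n] x = h ((⇑g)^[n] (h⁻¹ x)) := by
    intro n x
    induction n with
    | zero => simp
    | succ n ih =>
        rw [Function.iterate_succ_apply', ih, Function.iterate_succ_apply']
        simp [Equiv.Perm.mul_apply]
  constructor
  · have : (⇑(h*g*h⁻¹))^[1] (h p) = h ((⇑g)^[1] (h⁻¹ (h p))) := happ 1 (h p)
    simpa [hfix] using this
  · have hc := hcont'.continuousAt (x := h p)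
    rw [Metric.continuousAt_iff] at hc
    obtain ⟨δ, hδ, hc⟩ := hc ε hε
    refine ⟨δ, hδ, fun y hy => ?_⟩
    have hy2 : |h⁻¹ y - p| < ε := by
      have := hc (by simpa [Real.dist_eq] using hy)
      rw [Real.dist_eq, h.inv_apply_self] at this
      exact this
    have ht := hconv (h⁻¹ y) hy2
    have := (hcont.tendsto p).comp ht
    simp only [Function.comp_def] at this
    simp only [happ]
    exact this

lemma rep_conj (h g : Equiv.Perm ℝ) (hmono : StrictMono h) {q : ℝ}
    (hrep : IsRepellingFixedPt g q) : IsRepellingFixedPt (h*g*h⁻¹) (h q) := by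
  unfold IsRepellingFixedPt at hrep ⊢
  have : (h*g*h⁻¹)⁻¹ = h * g⁻¹ * h⁻¹ := by group
  rw [this]
  exact attr_conj h g⁻¹ hmono hrep

lemma hyper_inv (g : Equiv.Perm ℝ) (h : HyperbolicLike g) : HyperbolicLike g⁻¹ := by
  obtain ⟨p, q, hpq, hp, hq, hattr, hrep, hfix⟩ := h
  refine ⟨q, p, hpq.symm, hq, hp, hrep, ?_, ?_⟩
  · unfold IsRepellingFixedPt
    rw [inv_inv]
    exact hattr
  · have : {x ∈ Set.Ico (0:ℝ) 1 | g⁻¹ x = x} = {x ∈ Set.Ico (0:ℝ) 1 | g x = x} := by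
      ext x
      simp only [Set.mem_setOf_eq, Set.mem_sep_iff]
      constructor
      · rintro ⟨h1, h2⟩
        exact ⟨h1, by conv_lhs => rw [← h2]; rw [g.apply_inv_self]⟩
      · rintro ⟨h1, h2⟩
        refine ⟨h1, ?_⟩
        conv_lhs => rw [← h2]
        rw [g.inv_apply_self]
    rw [this, hfix]
    ext z
    simp only [Set.mem_insert_iff, Set.mem_singleton_iff]
    tauto

lemma fixset_saturated (g : Equiv.Perm ℝ) (hct : CommT g) {p q : ℝ}
    (hp : p ∈ Set.Ico (0:ℝ) 1) (hq : q ∈ Set.Ico (0:ℝ) 1)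
    (hfix : {x ∈ Set.Ico (0:ℝ) 1 | g x = x} = {p, q}) :
    ∀ z : ℝ, g z = z → ∃ k : ℤ, z = p + k ∨ z = q + k := by
  intro z hz
  have hfr : g (Int.fract z) = Int.fract z := by
    have h1 : Int.fract z = z + (-⌊z⌋ : ℤ) := by
      have : Int.fract z = z - ⌊z⌋ := rfl
      rw [this]; push_cast; ring
    rw [h1, commT_int hct z (-⌊z⌋), hz]
  have hmem : Int.fract z ∈ {x ∈ Set.Ico (0:ℝ) 1 | g x = x} :=
    ⟨⟨Int.fract_nonneg z, Int.fract_lt_one z⟩, hfr⟩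
  rw [hfix] at hmem
  rcases hmem with h | h
  · refine ⟨⌊z⌋, Or.inl ?_⟩
    have : Int.fract z = z - ⌊z⌋ := rfl
    rw [← h, this]; ring
  · refine ⟨⌊z⌋, Or.inr ?_⟩
    simp only [Set.mem_singleton_iff] at h
    have : Int.fract z = z - ⌊z⌋ := rfl
    rw [← h, this]; ring

/-- build an NSData from translated fixed point data -/
lemma nsdata_of (g : Equiv.Perm ℝ) (hsm : StrictMono g) (hct : CommT g) (p q : ℝ)
    (hfixset : ∀ z : ℝ, g z = z → ∃ k : ℤ, z = p + k ∨ z = q + k)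
    (hattr : IsAttractingFixedPt (⇑g) p) (hfixq : g q = q)
    (R A : ℝ) (kR kA : ℤ) (hR : R = q + kR) (hA : A = p + kA)
    (h1 : R < A) (h2 : A < R + 1) : NSData (⇑g) R A := by
  have hfixA : IsAttractingFixedPt (⇑g) A := hA ▸ attr_translate hct hattr kA
  refine ⟨hsm, perm_continuous g hsm, hct, ?_, hfixA.1, h1, h2, ?_, ?_⟩
  · rw [hR, commT_int hct q kR, hfixq]
  · intro z hz
    obtain ⟨k, hk | hk⟩ := hfixset z hz
    · refine ⟨k - kA, Or.inr ?_⟩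
      rw [hk, hA]; push_cast; ring
    · refine ⟨k - kR, Or.inl ?_⟩
      rw [hk, hR]; push_cast; ring
  · exact hfixA.2

end Transport


section Pinch

lemma not_countable_Ioo {a b : ℝ} (h : a < b) : ¬ (Set.Ioo a b).Countable := by
  intro hc
  have h1 : Countable (Set.Ioo a b) := hc.to_subtype
  have h2 : Cardinal.mk (Set.Ioo a b) ≤ Cardinal.aleph0 := Cardinal.mk_le_aleph0
  rw [Cardinal.mk_Ioo_real h] at h2
  exact absurd h2 (not_le_of_gt Cardinal.aleph0_lt_continuum)

lemma rep_fix (g : Equiv.Perm ℝ) (x : ℝ) (h : IsRepellingFixedPt g x) : g x = x := by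
  have h1 : g⁻¹ x = x := h.1
  conv_lhs => rw [← h1]
  exact g.apply_inv_self x

variable (G : Subgroup (Equiv.Perm ℝ))
variable (hhomeo : ∀ g ∈ G, StrictMono g ∧ CommT g)
variable (hmin : ∀ x : ℝ, Dense {y : ℝ | ∃ g ∈ G, g x = y})
include hhomeo hmin

lemma orbit_dense_avoid (x₀ c δ : ℝ) (hδ : 0 < δ) (S : Finset ℝ) :
    ∃ h ∈ G, |h x₀ - c| < δ ∧ ∀ w ∈ S, ∀ k : ℤ, h x₀ ≠ w + k := by
  classical
  set Bad := ⋃ w ∈ (S : Set ℝ), Set.range (fun k : ℤ => w + (k:ℝ)) with hBad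
  have hBadcl : IsClosed Bad := by
    apply Set.Finite.isClosed_biUnion S.finite_toSet
    intro w _
    have heq : (Set.range (fun k : ℤ => w + (k:ℝ)))
        = (fun z : ℝ => z - w) ⁻¹' (Set.range (Int.cast : ℤ → ℝ)) := by
      ext z
      constructor
      · rintro ⟨k, rfl⟩; exact ⟨k, by ring⟩
      · rintro ⟨k, hk⟩; exact ⟨k, by simp only [Set.mem_preimage] at hk ⊢; linarith⟩
    rw [heq]
    exact Int.isClosedEmbedding_coe_real.isClosed_range.preimage
      (continuous_id.sub continuous_const)
  have hBadct : Bad.Countable :=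
    Set.Countable.biUnion S.countable_toSet (fun w _ => Set.countable_range _)
  set U := Set.Ioo (c-δ) (c+δ) \ Bad with hU
  have hUopen : IsOpen U := isOpen_Ioo.sdiff hBadcl
  have hUne : U.Nonempty := by
    by_contra hcon
    rw [Set.not_nonempty_iff_eq_empty, Set.diff_eq_empty] at hcon
    exact not_countable_Ioo (show c - δ < c + δ by linarith) (hBadct.mono hcon)
  obtain ⟨y, ⟨h, hG, hyx⟩, hyU⟩ := (hmin x₀).exists_mem_open hUopen hUne
  refine ⟨h, hG, ?_, ?_⟩
  · rw [hyx]
    obtain ⟨⟨h1, h2⟩, _⟩ := hyU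
    rw [abs_lt]; constructor <;> linarith
  · intro w hw k hk
    apply hyU.2
    rw [hBad]
    refine Set.mem_biUnion hw ⟨k, ?_⟩
    rw [← hyx, hk]

omit hhomeo hmin in
lemma conj_ne_one {u g : Equiv.Perm ℝ} (hg : g ≠ 1) : u * g * u⁻¹ ≠ 1 := by
  intro h
  apply hg
  have := congrArg (fun t => u⁻¹ * t * u) h
  simpa [mul_assoc] using this

omit hhomeo hmin in
lemma rep_translate {g : Equiv.Perm ℝ} (hct : CommT g) {x : ℝ}
    (h : IsRepellingFixedPt g x) (k : ℤ) : IsRepellingFixedPt g (x + k) :=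
  attr_translate (commT_inv g hct) h k

/-- The pinch lemma: hyperbolic-like elements with both fixed points in a
prescribed small ball exist. -/
lemma pinch (g₀ : Equiv.Perm ℝ) (hg₀G : g₀ ∈ G) (hg₀ : g₀ ≠ 1) (hH : HyperbolicLike g₀)
    (c δ : ℝ) (hδ : 0 < δ) :
    ∃ e : Equiv.Perm ℝ, ∃ A R : ℝ, e ∈ G ∧ e ≠ 1 ∧
      IsAttractingFixedPt (⇑e) A ∧ IsRepellingFixedPt e R ∧
      (∀ z : ℝ, e z = z → ∃ j : ℤ, z = A + j ∨ z = R + j) ∧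
      |A - c| < δ ∧ |R - c| < δ ∧ A ≠ R := by
  classical
  obtain ⟨p, q, hpq, hpI, hqI, hattr, hrep, hfixeq⟩ := hH
  have hg₀sm := (hhomeo g₀ hg₀G).1
  have hg₀ct := (hhomeo g₀ hg₀G).2
  have hq_fix : g₀ q = q := rep_fix g₀ q hrep
  have hfixsat := fixset_saturated g₀ hg₀ct hpI hqI hfixeq
  -- conjugator w placing the repelling class away from the classes of p and q
  obtain ⟨w, hwG, hwball, hwavoid⟩ := orbit_dense_avoid G hhomeo hmin q 0 1 one_pos {p, q}
  have hwsm := (hhomeo w hwG).1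
  have hwct := (hhomeo w hwG).2
  set h := w * g₀ * w⁻¹ with hh
  have hhG : h ∈ G := mul_mem (mul_mem hwG hg₀G) (inv_mem hwG)
  have hhsm := (hhomeo h hhG).1
  have hhct := (hhomeo h hhG).2
  set R₀ := w q with hR₀
  -- h-fixed points are w-images of g₀-fixed points
  have happly : ∀ z : ℝ, h z = w (g₀ (w⁻¹ z)) := by
    intro z; simp [hh, Equiv.Perm.mul_apply]
  have hfixset_h : ∀ z : ℝ, h z = z → ∃ k : ℤ, z = w p + k ∨ z = w q + k := by
    intro z hz
    have h1 : g₀ (w⁻¹ z) = w⁻¹ z := by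
      have h2 : w (g₀ (w⁻¹ z)) = z := by rw [← happly z, hz]
      have := congrArg (⇑w⁻¹) h2
      rwa [w.inv_apply_self] at this
    obtain ⟨k, hk | hk⟩ := hfixsat _ h1
    · refine ⟨k, Or.inl ?_⟩
      have := congrArg (⇑w) hk
      rw [w.apply_inv_self, commT_int hwct p k] at this
      exact this
    · refine ⟨k, Or.inr ?_⟩
      have := congrArg (⇑w) hk
      rw [w.apply_inv_self, commT_int hwct q k] at this
      exact this
  have hattr_h : IsAttractingFixedPt (⇑h) (w p) := attr_conj w g₀ hwsm hattr
  have hfixq_h : h (w q) = w q := by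
    rw [happly, w.inv_apply_self, hq_fix]
  -- the attracting representative in the fundamental interval over R₀
  have hwpq : ∀ k : ℤ, w p ≠ w q + k := by
    intro k hk
    have h1 : w p = w (q + k) := by rw [hk, commT_int hwct q k]
    have h2 : p = q + k := w.injective h1
    have h3 : |p - q| < 1 := by
      rw [abs_lt]
      constructor <;>
        [linarith [hpI.1, hpI.2, hqI.1, hqI.2]; linarith [hpI.1, hpI.2, hqI.1, hqI.2]]
    have h4 : (k:ℝ) = p - q := by linarith
    have h5 : |(k:ℝ)| < 1 := h4 ▸ h3
    have h6 : k = 0 := by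
      have h7 : |k| < 1 := by exact_mod_cast h5
      have := abs_lt.mp h7
      omega
    rw [h6] at h2
    push_cast at h2
    exact hpq (by linarith)
  have hfr_pos : ∀ t : ℝ, (∀ k : ℤ, t ≠ k) → 0 < Int.fract t := by
    intro t ht
    rcases lt_or_eq_of_le (Int.fract_nonneg t) with h | h
    · exact h
    · exfalso
      have h2 : Int.fract t = 0 := h.symm
      have h3 : t - ⌊t⌋ = 0 := h2
      exact ht ⌊t⌋ (by linarith)
  set A₀ := R₀ + Int.fract (w p - R₀) with hA₀
  have hA₀cl : A₀ = w p + (-⌊w p - R₀⌋ : ℤ) := by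
    have : Int.fract (w p - R₀) = w p - R₀ - ⌊w p - R₀⌋ := rfl
    rw [hA₀, this]; push_cast; ring
  have hfrA : 0 < Int.fract (w p - R₀) := by
    apply hfr_pos
    intro k hk
    exact hwpq k (by linarith)
  have hA₀1 : R₀ < A₀ := by rw [hA₀]; linarith
  have hA₀2 : A₀ < R₀ + 1 := by rw [hA₀]; linarith [Int.fract_lt_one (w p - R₀)]
  have ND : NSData (⇑h) R₀ A₀ :=
    nsdata_of h hhsm hhct (w p) (w q) hfixset_h hattr_h hfixq_h R₀ A₀ 0 (-⌊w p - R₀⌋)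
      (by push_cast; ring) hA₀cl hA₀1 hA₀2
  -- interior representatives of the classes of p and q
  have havoid_p : ∀ k : ℤ, R₀ ≠ p + k := by
    intro k
    exact hwavoid p (by simp) k
  have havoid_q : ∀ k : ℤ, R₀ ≠ q + k := by
    intro k
    exact hwavoid q (by simp) k
  set mP : ℤ := -⌊p - R₀⌋ with hmP
  set P₁ := p + (mP:ℝ) with hP₁
  have hP₁f : P₁ = R₀ + Int.fract (p - R₀) := by
    have : Int.fract (p - R₀) = p - R₀ - ⌊p - R₀⌋ := rfl
    rw [hP₁, this, hmP]; push_cast; ring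
  have hP₁1 : R₀ < P₁ := by
    rw [hP₁f]
    have : 0 < Int.fract (p - R₀) := by
      apply hfr_pos
      intro k hk
      exact havoid_p (-k) (by push_cast; linarith)
    linarith
  have hP₁2 : P₁ < R₀ + 1 := by
    rw [hP₁f]; linarith [Int.fract_lt_one (p - R₀)]
  set mQ : ℤ := -⌊q - R₀⌋ with hmQ
  set Q₁ := q + (mQ:ℝ) with hQ₁
  have hQ₁f : Q₁ = R₀ + Int.fract (q - R₀) := by
    have : Int.fract (q - R₀) = q - R₀ - ⌊q - R₀⌋ := rfl
    rw [hQ₁, this, hmQ]; push_cast; ring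
  have hQ₁1 : R₀ < Q₁ := by
    rw [hQ₁f]
    have : 0 < Int.fract (q - R₀) := by
      apply hfr_pos
      intro k hk
      exact havoid_q (-k) (by push_cast; linarith)
    linarith
  have hQ₁2 : Q₁ < R₀ + 1 := by
    rw [hQ₁f]; linarith [Int.fract_lt_one (q - R₀)]
  have htendP := ND.tendsto_interior hP₁1 hP₁2
  have htendQ := ND.tendsto_interior hQ₁1 hQ₁2
  -- conjugator k moving A₀ into the target ball
  obtain ⟨κ, hκG, hκball, _⟩ := orbit_dense_avoid G hhomeo hmin A₀ c (δ/2) (by linarith) ∅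
  have hκsm := (hhomeo κ hκG).1
  have hκct := (hhomeo κ hκG).2
  -- continuity of κ at A₀
  have hκcont := (perm_continuous κ hκsm).continuousAt (x := A₀)
  rw [Metric.continuousAt_iff] at hκcont
  obtain ⟨η, hη, hκc⟩ := hκcont (δ/2) (by linarith)
  -- choose N
  have hev := (htendP.eventually (Metric.eventually_nhds_iff_ball.mpr
      ⟨η, hη, fun z hz => hz⟩)).and
    (htendQ.eventually (Metric.eventually_nhds_iff_ball.mpr ⟨η, hη, fun z hz => hz⟩))
  rw [eventually_atTop] at hev
  obtain ⟨N, hN⟩ := hev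
  obtain ⟨hNP, hNQ⟩ := hN N (le_refl N)
  -- the final conjugate
  set u := κ * h^N with hu
  have huG : u ∈ G := mul_mem hκG (pow_mem hhG N)
  have husm := (hhomeo u huG).1
  have huct := (hhomeo u huG).2
  set e := u * g₀ * u⁻¹ with he
  have heG : e ∈ G := mul_mem (mul_mem huG hg₀G) (inv_mem huG)
  have hect := (hhomeo e heG).2
  have huapply : ∀ z : ℝ, u z = κ ((⇑h)^[N] z) := by
    intro z
    rw [hu]
    simp only [Equiv.Perm.mul_apply]
    rw [← Equiv.Perm.coe_pow]
  set A := κ ((⇑h)^[N] P₁) with hA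
  set R := κ ((⇑h)^[N] Q₁) with hRdef
  have hAu : A = u p + (mP:ℝ) := by
    rw [hA, hP₁]
    rw [commT_int (commT_iterate hhct N) p mP]
    rw [commT_int hκct _ mP]
    rw [huapply]
  have hRu : R = u q + (mQ:ℝ) := by
    rw [hRdef, hQ₁]
    rw [commT_int (commT_iterate hhct N) q mQ]
    rw [commT_int hκct _ mQ]
    rw [huapply]
  refine ⟨e, A, R, heG, conj_ne_one hg₀, ?_, ?_, ?_, ?_, ?_, ?_⟩
  · rw [hAu]
    exact attr_translate hect (attr_conj u g₀ husm hattr) mP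
  · rw [hRu]
    exact rep_translate hect (rep_conj u g₀ husm hrep) mQ
  · intro z hz
    have h1 : g₀ (u⁻¹ z) = u⁻¹ z := by
      have h2 : u (g₀ (u⁻¹ z)) = z := by
        have : e z = u (g₀ (u⁻¹ z)) := by simp [he, Equiv.Perm.mul_apply]
        rw [← this, hz]
      have := congrArg (⇑u⁻¹) h2
      rwa [u.inv_apply_self] at this
    obtain ⟨k, hk | hk⟩ := hfixsat _ h1
    · refine ⟨k - mP, Or.inl ?_⟩
      have := congrArg (⇑u) hk
      rw [u.apply_inv_self, commT_int huct p k] at this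
      rw [this, hAu]; push_cast; ring
    · refine ⟨k - mQ, Or.inr ?_⟩
      have := congrArg (⇑u) hk
      rw [u.apply_inv_self, commT_int huct q k] at this
      rw [this, hRu]; push_cast; ring
  · have h1 : |κ ((⇑h)^[N] P₁) - κ A₀| < δ/2 := by
      have := hκc (show dist ((⇑h)^[N] P₁) A₀ < η by
        rw [Real.dist_eq]
        have := hNP
        rw [Metric.mem_ball, Real.dist_eq] at this
        exact this)
      rw [Real.dist_eq] at this
      exact this
    rw [hA] at *
    calc |κ ((⇑h)^[N] P₁) - c| ≤ |κ ((⇑h)^[N] P₁) - κ A₀| + |κ A₀ - c| := abs_sub_le _ _ _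
    _ < δ/2 + δ/2 := by exact add_lt_add h1 hκball
    _ = δ := by ring
  · have h1 : |κ ((⇑h)^[N] Q₁) - κ A₀| < δ/2 := by
      have := hκc (show dist ((⇑h)^[N] Q₁) A₀ < η by
        rw [Real.dist_eq]
        have := hNQ
        rw [Metric.mem_ball, Real.dist_eq] at this
        exact this)
      rw [Real.dist_eq] at this
      exact this
    rw [hRdef] at *
    calc |κ ((⇑h)^[N] Q₁) - c| ≤ |κ ((⇑h)^[N] Q₁) - κ A₀| + |κ A₀ - c| := abs_sub_le _ _ _
    _ < δ/2 + δ/2 := by exact add_lt_add h1 hκball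
    _ = δ := by ring
  · intro hAR
    rw [hAu, hRu] at hAR
    have h1 : u p = u (q + ((mQ - mP : ℤ):ℝ)) := by
      rw [commT_int huct q (mQ - mP)]
      push_cast
      push_cast at hAR
      linarith
    have h2 : p = q + ((mQ - mP : ℤ):ℝ) := u.injective h1
    have h3 : |p - q| < 1 := by
      rw [abs_lt]
      constructor <;>
        [linarith [hpI.1, hpI.2, hqI.1, hqI.2]; linarith [hpI.1, hpI.2, hqI.1, hqI.2]]
    have h4 : |((mQ - mP : ℤ):ℝ)| < 1 := by
      rw [show ((mQ - mP : ℤ):ℝ) = p - q by linarith]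
      exact h3
    have h5 : mQ - mP = 0 := by
      have h7 : |mQ - mP| < 1 := by exact_mod_cast h4
      have := abs_lt.mp h7
      omega
    rw [h5] at h2
    push_cast at h2
    exact hpq (by linarith)

end Pinch


section SignUp

lemma sign_up_of_rep (cc : Equiv.Perm ℝ) (hsm : StrictMono cc)
    (hcont : Continuous ⇑cc)
    (zp zm : ℝ) (hfixp : cc zp = zp) (hfixtop : cc (zm + 1) = zm + 1)
    (h2 : zp < zm + 1)
    (hnofix : ∀ w : ℝ, zp < w → w < zm + 1 → cc w ≠ w)
    (hrep : IsRepellingFixedPt cc zp) :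
    ∀ w : ℝ, zp < w → w < zm + 1 → w < cc w := by
  rcases sign_const hcont hnofix with h | h
  · exact h
  · exfalso
    obtain ⟨hfn, ε₀, hε₀, hconv⟩ := hrep
    have hfixp' : cc⁻¹ zp = zp := hfn
    have hfixtop' : cc⁻¹ (zm+1) = zm+1 := by
      have := congrArg (⇑cc⁻¹) hfixtop
      rw [cc.inv_apply_self] at this
      exact this.symm
    have hinvmono := strictMono_inv cc hsm
    set y₁ := min (zp + ε₀/2) ((zp + (zm+1))/2) with hy₁
    have hy₁l : zp < y₁ := lt_min (by linarith) (by linarith)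
    have hy₁r : y₁ < zm + 1 := lt_of_le_of_lt (min_le_right _ _) (by linarith)
    have hy₁ε : |y₁ - zp| < ε₀ := by
      have := min_le_left (zp + ε₀/2) ((zp + (zm+1))/2)
      rw [abs_lt]; constructor <;> [linarith; linarith]
    have hup : ∀ w, zp < w → w < zm+1 → w < cc⁻¹ w := by
      intro w hw1 hw2
      have h1 : cc⁻¹ w < zm+1 := by
        have := hinvmono hw2; rwa [hfixtop'] at this
      have h0 : zp < cc⁻¹ w := by
        have := hinvmono hw1; rwa [hfixp'] at this
      have := h _ h0 h1
      rwa [cc.apply_inv_self] at this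
    have hiter : ∀ n : ℕ, zp < (⇑cc⁻¹)^[n] y₁ ∧ (⇑cc⁻¹)^[n] y₁ < zm+1 ∧ y₁ ≤ (⇑cc⁻¹)^[n] y₁ := by
      intro n; induction n with
      | zero =>
          simp only [Function.iterate_zero, id_eq]
          exact ⟨hy₁l, hy₁r, le_refl _⟩
      | succ n ih =>
          rw [Function.iterate_succ_apply']
          obtain ⟨i1, i2, i3⟩ := ih
          have hu := hup _ i1 i2
          have hlt : cc⁻¹ ((⇑cc⁻¹)^[n] y₁) < zm+1 := by
            have := hinvmono i2; rwa [hfixtop'] at this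
          exact ⟨lt_trans i1 hu, hlt, le_trans i3 hu.le⟩
    have htend := hconv y₁ hy₁ε
    have hev := htend.eventually (eventually_lt_nhds hy₁l)
    obtain ⟨n, hn⟩ := hev.exists
    exact absurd hn (not_lt_of_ge (hiter n).2.2)

lemma fix_inv_iff (g : Equiv.Perm ℝ) (z : ℝ) : g⁻¹ z = z ↔ g z = z := by
  constructor
  · intro h
    conv_lhs => rw [← h]
    exact g.apply_inv_self z
  · intro h
    conv_lhs => rw [← h]
    exact g.inv_apply_self z

lemma int_far {t : ℝ} {d : ℝ} (h1 : d ≤ t) (h2 : t ≤ 1 - d) (hd : 0 < d) :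
    ∀ j : ℤ, d ≤ |t - j| := by
  intro j
  rcases le_or_gt (j:ℝ) 0 with hj | hj
  · rw [abs_of_nonneg (by linarith)]
    linarith
  · have hj1 : (1:ℝ) ≤ j := by exact_mod_cast hj
    rw [abs_of_nonpos (by linarith)]
    linarith

end SignUp


end Stmt12Proof

set_option maxHeartbeats 2000000 in
open Stmt12Proof in
/-- pairs (repelling, attracting) of fixed points of hyperbolic-like
elements are dense in pairs of points. -/
theorem stmt12 (G : Subgroup (Equiv.Perm ℝ))
    (hhomeo : ∀ g ∈ G, StrictMono g ∧ CommT g)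
    (hnonab : ∃ a ∈ G, ∃ b ∈ G, a * b ≠ b * a)
    (hmin : ∀ x : ℝ, Dense {y : ℝ | ∃ g ∈ G, g x = y})
    (hhyp : ∀ g ∈ G, g ≠ 1 → (∃ x : ℝ, g x = x) → HyperbolicLike g) :
    ∀ x ∈ Set.Ico (0:ℝ) 1, ∀ y ∈ Set.Ico (0:ℝ) 1, ∀ ε : ℝ, 0 < ε →
      ∃ g ∈ G, HyperbolicLike g ∧ ∃ gm gp : ℝ,
        IsRepellingFixedPt g gm ∧ IsAttractingFixedPt (⇑g) gp ∧
        |gm - x| < ε ∧ |gp - y| < ε := by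
  intro x _hx y _hy ε hε
  classical
  -- scales
  set δ := min ε 1 / 100 with hδdef
  have h0min : 0 < min ε 1 := lt_min hε one_pos
  have hδ : 0 < δ := by rw [hδdef]; linarith
  have hδε : δ ≤ ε / 100 := by
    have := min_le_left ε 1
    rw [hδdef]; linarith
  have hδ1 : δ ≤ 1/100 := by
    have := min_le_right ε 1
    rw [hδdef]; linarith
  -- target geometry
  set d' := Int.fract (y - x) with hd'
  set k₁ := ⌊y - x⌋ with hk₁
  have hyd : y = x + d' + k₁ := by
    have h1 : d' = y - x - k₁ := rfl
    linarith
  have hd'0 : 0 ≤ d' := Int.fract_nonneg _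
  have hd'1 : d' < 1 := Int.fract_lt_one _
  set s := min (max d' (9*δ)) (1 - 9*δ) with hs
  have hs1 : 9*δ ≤ s := by
    apply le_min
    · exact le_trans (le_max_right d' (9*δ)) (le_refl _)
    · linarith
  have hs2 : s ≤ 1 - 9*δ := min_le_right _ _
  have hsd : |s - d'| ≤ 9*δ := by
    rcases le_total d' (9*δ) with h | h
    · have hmax : max d' (9*δ) = 9*δ := max_eq_right h
      have hmin9 : s = 9*δ := by rw [hs, hmax]; exact min_eq_left (by linarith)
      rw [hmin9, abs_le]; constructor <;> linarith
    · have hmax : max d' (9*δ) = d' := max_eq_left h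
      rcases le_total d' (1 - 9*δ) with h2 | h2
      · have hseq : s = d' := by rw [hs, hmax]; exact min_eq_left h2
        rw [hseq, sub_self, abs_zero]; linarith
      · have hseq : s = 1 - 9*δ := by rw [hs, hmax]; exact min_eq_right h2
        rw [hseq, abs_le]; constructor <;> linarith
  set yy := x + s with hyy
  -- a hyperbolic-like element
  obtain ⟨g₀, hg₀G, hg₀ne, hg₀H⟩ := exists_hyperbolic G hhomeo hnonab hhyp
  -- pinched elements at the two clusters
  obtain ⟨e₀, Ae, Re, he₀G, he₀ne, he₀attr, he₀rep, he₀fix, hAex, hRex, hAeRe⟩ :=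
    pinch G hhomeo hmin g₀ hg₀G hg₀ne hg₀H x (2*δ) (by linarith)
  obtain ⟨f₀, Af, Rf, hf₀G, hf₀ne, hf₀attr, hf₀rep, hf₀fix, hAfy, hRfy, hAfRf⟩ :=
    pinch G hhomeo hmin g₀ hg₀G hg₀ne hg₀H yy (2*δ) (by linarith)
  -- orientation for e : repelling < attracting
  obtain ⟨eh, ρ, σ, hehG, hehattr, hehrep, hehfix, hρσ, hρx, hσx⟩ :
      ∃ eh : Equiv.Perm ℝ, ∃ ρ σ : ℝ, eh ∈ G ∧ IsAttractingFixedPt (⇑eh) σ ∧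
        IsRepellingFixedPt eh ρ ∧
        (∀ z : ℝ, eh z = z → ∃ j : ℤ, z = σ + j ∨ z = ρ + j) ∧
        ρ < σ ∧ |ρ - x| < 2*δ ∧ |σ - x| < 2*δ := by
    rcases lt_or_gt_of_ne hAeRe with h | h
    · refine ⟨e₀⁻¹, Ae, Re, inv_mem he₀G, he₀rep, ?_, ?_, h, hAex, hRex⟩
      · unfold IsRepellingFixedPt
        rw [inv_inv]
        exact he₀attr
      · intro z hz
        rw [fix_inv_iff] at hz
        obtain ⟨j, hj | hj⟩ := he₀fix z hz
        · exact ⟨j, Or.inr hj⟩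
        · exact ⟨j, Or.inl hj⟩
    · refine ⟨e₀, Re, Ae, he₀G, he₀attr, he₀rep, ?_, h, hRex, hAex⟩
      intro z hz
      obtain ⟨j, hj | hj⟩ := he₀fix z hz
      · exact ⟨j, Or.inl hj⟩
      · exact ⟨j, Or.inr hj⟩
  -- orientation for f : attracting < repelling
  obtain ⟨fh, τ, υ, hfhG, hfhattr, hfhrep, hfhfix, hτυ, hτy, hυy⟩ :
      ∃ fh : Equiv.Perm ℝ, ∃ τ υ : ℝ, fh ∈ G ∧ IsAttractingFixedPt (⇑fh) τ ∧
        IsRepellingFixedPt fh υ ∧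
        (∀ z : ℝ, fh z = z → ∃ j : ℤ, z = τ + j ∨ z = υ + j) ∧
        τ < υ ∧ |τ - yy| < 2*δ ∧ |υ - yy| < 2*δ := by
    rcases lt_or_gt_of_ne hAfRf with h | h
    · refine ⟨f₀, Af, Rf, hf₀G, hf₀attr, hf₀rep, ?_, h, hAfy, hRfy⟩
      intro z hz
      obtain ⟨j, hj | hj⟩ := hf₀fix z hz
      · exact ⟨j, Or.inl hj⟩
      · exact ⟨j, Or.inr hj⟩
    · refine ⟨f₀⁻¹, Rf, Af, inv_mem hf₀G, hf₀rep, ?_, ?_, h, hRfy, hAfy⟩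
      · unfold IsRepellingFixedPt
        rw [inv_inv]
        exact hf₀attr
      · intro z hz
        rw [fix_inv_iff] at hz
        obtain ⟨j, hj | hj⟩ := hf₀fix z hz
        · exact ⟨j, Or.inr hj⟩
        · exact ⟨j, Or.inl hj⟩
  -- cluster arithmetic
  have hρx' := abs_lt.mp hρx
  have hσx' := abs_lt.mp hσx
  have hτy' := abs_lt.mp hτy
  have hυy' := abs_lt.mp hυy
  have hτρ1 : 5*δ ≤ τ - ρ := by
    rw [hyy] at hτy'
    linarith [hτy'.1, hρx'.2]
  have hτρ2 : τ - ρ ≤ 1 - 5*δ := by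
    rw [hyy] at hτy'
    linarith [hτy'.2, hρx'.1]
  have hσν1 : 5*δ ≤ σ - υ + 1 := by
    rw [hyy] at hυy'
    linarith [hσx'.1, hυy'.2]
  have hσν2 : σ - υ + 1 ≤ 1 - 5*δ := by
    rw [hyy] at hυy'
    linarith [hσx'.2, hυy'.1]
  -- group facts
  have hehsm := (hhomeo eh hehG).1
  have hehct := (hhomeo eh hehG).2
  have hfhsm := (hhomeo fh hfhG).1
  have hfhct := (hhomeo fh hfhG).2
  have hσfix : eh σ = σ := hehattr.1
  have hρfix : eh ρ = ρ := rep_fix eh ρ hehrep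
  have hτfix : fh τ = τ := hfhattr.1
  have hυfix : fh υ = υ := rep_fix fh υ hfhrep
  -- NS data
  have NDe : NSData (⇑eh) ρ σ :=
    nsdata_of eh hehsm hehct σ ρ hehfix hehattr hρfix ρ σ 0 0 (by push_cast; ring)
      (by push_cast; ring) hρσ (by linarith [hρx'.1, hσx'.2])
  have NDf : NSData (⇑fh) (υ-1) τ :=
    nsdata_of fh hfhsm hfhct τ υ hfhfix hfhattr hυfix (υ-1) τ (-1) 0 (by push_cast; ring)
      (by push_cast; ring) (by linarith [hτy'.1, hυy'.2]) (by linarith)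
  have NDe' : NSData (⇑eh⁻¹) (σ-1) ρ := by
    refine nsdata_of eh⁻¹ (strictMono_inv eh hehsm) (commT_inv eh hehct) ρ σ ?_ hehrep ?_
      (σ-1) ρ (-1) 0 (by push_cast; ring) (by push_cast; ring)
      (by linarith [hρx'.1, hσx'.2]) (by linarith)
    · intro z hz
      rw [fix_inv_iff] at hz
      obtain ⟨j, hj | hj⟩ := hehfix z hz
      · exact ⟨j, Or.inr hj⟩
      · exact ⟨j, Or.inl hj⟩
    · rw [fix_inv_iff]
      exact hσfix
  have NDf' : NSData (⇑fh⁻¹) τ υ := by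
    refine nsdata_of fh⁻¹ (strictMono_inv fh hfhsm) (commT_inv fh hfhct) υ τ ?_ hfhrep ?_
      τ υ 0 0 (by push_cast; ring) (by push_cast; ring) hτυ
      (by linarith [hτy'.1, hυy'.2])
    · intro z hz
      rw [fix_inv_iff] at hz
      obtain ⟨j, hj | hj⟩ := hfhfix z hz
      · exact ⟨j, Or.inr hj⟩
      · exact ⟨j, Or.inl hj⟩
    · rw [fix_inv_iff]
      exact hτfix
  -- uniform estimates
  obtain ⟨N₁, hN₁⟩ := NDe.uniform (μ := 4*δ) (η := δ) (by linarith) (by linarith) hδ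
  obtain ⟨M₁, hM₁⟩ := NDf.uniform (μ := 4*δ) (η := δ) (by linarith) (by linarith) hδ
  obtain ⟨M₂, hM₂⟩ := NDf'.uniform (μ := 4*δ) (η := δ) (by linarith) (by linarith) hδ
  obtain ⟨N₂, hN₂⟩ := NDe'.uniform (μ := 4*δ) (η := δ) (by linarith) (by linarith) hδ
  obtain ⟨N₃, hN₃⟩ := NDe.saturated (μ := 2*δ) (η := δ) (by linarith) (by linarith) hδ
  obtain ⟨M₃, hM₃⟩ := NDf.saturated (μ := 4*δ) (η := δ) (by linarith) (by linarith) hδ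
  set n := max N₁ (max N₂ N₃) with hn
  set m := max M₁ (max M₂ M₃) with hm
  have hn1 : N₁ ≤ n := le_max_left _ _
  have hn2 : N₂ ≤ n := le_trans (le_max_left _ _) (le_max_right _ _)
  have hn3 : N₃ ≤ n := le_trans (le_max_right _ _) (le_max_right _ _)
  have hm1 : M₁ ≤ m := le_max_left _ _
  have hm2 : M₂ ≤ m := le_trans (le_max_left _ _) (le_max_right _ _)
  have hm3 : M₃ ≤ m := le_trans (le_max_right _ _) (le_max_right _ _)
  -- the candidate element
  set cc := fh^m * eh^n with hcc
  have hccG : cc ∈ G := mul_mem (pow_mem hfhG m) (pow_mem hehG n)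
  have hccsm := (hhomeo cc hccG).1
  have hccct := (hhomeo cc hccG).2
  have hccont := perm_continuous cc hccsm
  have hccapp : ∀ z : ℝ, cc z = (⇑fh)^[m] ((⇑eh)^[n] z) := by
    intro z
    have h1 : cc z = (fh^m) ((eh^n) z) := by rw [hcc]; rfl
    rw [h1, Equiv.Perm.coe_pow, Equiv.Perm.coe_pow]
  have hccinvapp : ∀ z : ℝ, cc⁻¹ z = (⇑eh⁻¹)^[n] ((⇑fh⁻¹)^[m] z) := by
    intro z
    have hinv : cc⁻¹ = (eh⁻¹)^n * (fh⁻¹)^m := by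
      rw [hcc, mul_inv_rev, inv_pow, inv_pow]
    have h1 : cc⁻¹ z = ((eh⁻¹)^n) (((fh⁻¹)^m) z) := by rw [hinv]; rfl
    rw [h1, Equiv.Perm.coe_pow, Equiv.Perm.coe_pow]
  -- forward contraction of the ball around τ
  have hfwd : ∀ w : ℝ, τ - δ ≤ w → w ≤ τ + δ → τ - δ < cc w ∧ cc w < τ + δ := by
    intro w h1 h2
    have he := hN₁ n hn1 w (by linarith) (by linarith)
    have hf := hM₁ m hm1 ((⇑eh)^[n] w) (by linarith [he.1, he.2]) (by linarith [he.1, he.2])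
    rw [hccapp]
    exact hf
  -- backward contraction of the ball around ρ
  have hbwd : ∀ w : ℝ, ρ - δ ≤ w → w ≤ ρ + δ → ρ - δ < cc⁻¹ w ∧ cc⁻¹ w < ρ + δ := by
    intro w h1 h2
    have hshift := commT_int (commT_iterate (commT_inv fh hfhct) m) w 1
    push_cast at hshift
    have hf := hM₂ m hm2 (w + 1) (by linarith) (by linarith)
    rw [hshift] at hf
    have he := hN₂ n hn2 ((⇑fh⁻¹)^[m] w) (by linarith [hf.1, hf.2]) (by linarith [hf.1, hf.2])
    rw [hccinvapp]
    exact he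
  -- fixed point near τ
  have hφc : Continuous (fun w : ℝ => cc w - w) := hccont.sub continuous_id
  obtain ⟨zp, hzpI, hzpfix0⟩ : ∃ z ∈ uIcc (τ - δ) (τ + δ), cc z - z = 0 := by
    have ha := hfwd (τ - δ) (le_refl _) (by linarith)
    have hb := hfwd (τ + δ) (by linarith) (le_refl _)
    have h0 : (0:ℝ) ∈ uIcc (cc (τ-δ) - (τ-δ)) (cc (τ+δ) - (τ+δ)) := by
      rw [Set.mem_uIcc]
      right
      constructor <;> [linarith [hb.2]; linarith [ha.1]]
    obtain ⟨z, hzI, hz0⟩ := intermediate_value_uIcc hφc.continuousOn h0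
    exact ⟨z, hzI, hz0⟩
  have hzpfix : cc zp = zp := by linarith [hzpfix0]
  have hzpb : τ - δ ≤ zp ∧ zp ≤ τ + δ := by
    rw [Set.uIcc_of_le (by linarith : τ - δ ≤ τ + δ)] at hzpI
    exact ⟨hzpI.1, hzpI.2⟩
  -- fixed point near ρ
  have hφc' : Continuous (fun w : ℝ => cc⁻¹ w - w) := (perm_inv_continuous cc hccsm).sub continuous_id
  obtain ⟨zm, hzmI, hzmfix0⟩ : ∃ z ∈ uIcc (ρ - δ) (ρ + δ), cc⁻¹ z - z = 0 := by
    have ha := hbwd (ρ - δ) (le_refl _) (by linarith)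
    have hb := hbwd (ρ + δ) (by linarith) (le_refl _)
    have h0 : (0:ℝ) ∈ uIcc (cc⁻¹ (ρ-δ) - (ρ-δ)) (cc⁻¹ (ρ+δ) - (ρ+δ)) := by
      rw [Set.mem_uIcc]
      right
      constructor <;> [linarith [hb.2]; linarith [ha.1]]
    obtain ⟨z, hzI, hz0⟩ := intermediate_value_uIcc hφc'.continuousOn h0
    exact ⟨z, hzI, hz0⟩
  have hzmfix : cc zm = zm := by
    rw [← fix_inv_iff]
    linarith [hzmfix0]
  have hzmb : ρ - δ ≤ zm ∧ zm ≤ ρ + δ := by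
    rw [Set.uIcc_of_le (by linarith : ρ - δ ≤ ρ + δ)] at hzmI
    exact ⟨hzmI.1, hzmI.2⟩
  -- global ping-pong
  have hfar : ∀ l : ℤ, 5*δ ≤ |σ - υ + 1 - l| :=
    int_far hσν1 hσν2 (by linarith)
  have hpong : ∀ z : ℝ, (∀ j : ℤ, ¬ |z - (ρ + j)| < 2*δ) → ∃ j : ℤ, |cc z - (τ + j)| < δ := by
    intro z hz
    obtain ⟨k, hk⟩ := hN₃ n hn3 z hz
    have hzfar : ∀ j : ℤ, ¬ |(⇑eh)^[n] z - ((υ-1) + j)| < 4*δ := by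
      intro j hcon
      have h5 := hfar (j - k)
      have heq : σ - υ + 1 - ((j - k : ℤ):ℝ) = (σ + k) - ((υ-1) + j) := by push_cast; ring
      rw [heq] at h5
      have htri : |σ + k - ((υ-1)+j)| ≤ |σ + k - (⇑eh)^[n] z| + |(⇑eh)^[n] z - ((υ-1)+j)| :=
        abs_sub_le _ _ _
      rw [abs_sub_comm] at hk
      linarith
    obtain ⟨j, hj⟩ := hM₃ m hm3 ((⇑eh)^[n] z) hzfar
    refine ⟨j, ?_⟩
    rw [hccapp]
    exact hj
  -- the witness point showing cc ≠ 1
  set w₀ := (τ + ρ + 1)/2 with hw₀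
  have hw₀ρ : ∀ j : ℤ, 5*δ/2 ≤ |w₀ - ρ - j| := by
    apply int_far (by rw [hw₀]; linarith) (by rw [hw₀]; linarith) (by linarith)
  have hw₀τ : ∀ j : ℤ, 5*δ/2 ≤ |w₀ - τ - j| := by
    apply int_far (by rw [hw₀]; linarith) (by rw [hw₀]; linarith) (by linarith)
  have hw₀far : ∀ j : ℤ, ¬ |w₀ - (ρ + j)| < 2*δ := by
    intro j hcon
    have := hw₀ρ j
    have heq : w₀ - (ρ + j) = w₀ - ρ - j := by ring
    rw [heq] at hcon
    linarith
  obtain ⟨j₀, hj₀⟩ := hpong w₀ hw₀far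
  have hccne : cc ≠ 1 := by
    intro h1
    have hccw1 : cc w₀ = w₀ := by rw [h1]; simp
    rw [hccw1] at hj₀
    have h2 := hw₀τ j₀
    have heq : w₀ - (τ + j₀) = w₀ - τ - j₀ := by ring
    rw [heq] at hj₀
    linarith
  -- hyperbolic-like structure of cc
  obtain ⟨pS, qS, hpqS, hpSI, hqSI, hattrS, hrepS, hfixS⟩ := hhyp cc hccG hccne ⟨zp, hzpfix⟩
  have hfixsatS := fixset_saturated cc hccct hpSI hqSI hfixS
  have hzmzp : zm < zp := by linarith [hzpb.1, hzmb.2]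
  have hzdiff : ∀ j : ℤ, zp - zm ≠ j := by
    intro j hj
    have h3 := int_far (t := zp - zm) (d := 3*δ)
      (by linarith [hzpb.1, hzmb.2]) (by linarith [hzpb.2, hzmb.1]) (by linarith) j
    rw [hj] at h3
    simp at h3
    linarith
  obtain ⟨jp, hjp⟩ := hfixsatS zp hzpfix
  obtain ⟨jm, hjm⟩ := hfixsatS zm hzmfix
  have hmain : IsAttractingFixedPt (⇑cc) zp ∧ IsRepellingFixedPt cc zm := by
    rcases hjp with hjp | hjp
    · have hA : IsAttractingFixedPt (⇑cc) zp := by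
        rw [hjp]; exact attr_translate hccct hattrS jp
      rcases hjm with hjm | hjm
      · exfalso
        apply hzdiff (jp - jm)
        rw [hjp, hjm]; push_cast; ring
      · refine ⟨hA, ?_⟩
        rw [hjm]; exact rep_translate hccct hrepS jm
    · exfalso
      have hrepz : IsRepellingFixedPt cc zp := by
        rw [hjp]; exact rep_translate hccct hrepS jp
      have hjm' : zm = pS + jm := by
        rcases hjm with hjm | hjm
        · exact hjm
        · exfalso
          apply hzdiff (jp - jm)
          rw [hjp, hjm]; push_cast; ring
      have hnofix : ∀ w : ℝ, zp < w → w < zm + 1 → cc w ≠ w := by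
        intro w h1 h2 hw
        obtain ⟨i, hi | hi⟩ := hfixsatS w hw
        · have hwz : w = zm + ((i - jm : ℤ):ℝ) := by rw [hi, hjm']; push_cast; ring
          rcases le_or_gt ((i - jm : ℤ):ℝ) 0 with hl | hl
          · have : w ≤ zm := by rw [hwz]; linarith
            linarith
          · have hl1 : (1:ℝ) ≤ ((i - jm : ℤ):ℝ) := by exact_mod_cast hl
            have : zm + 1 ≤ w := by rw [hwz]; linarith
            linarith
        · have hwz : w = zp + ((i - jp : ℤ):ℝ) := by rw [hi, hjp]; push_cast; ring
          rcases le_or_gt ((i - jp : ℤ):ℝ) 0 with hl | hl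
          · have : w ≤ zp := by rw [hwz]; linarith
            linarith
          · have hl1 : (1:ℝ) ≤ ((i - jp : ℤ):ℝ) := by exact_mod_cast hl
            have : zp + 1 ≤ w := by rw [hwz]; linarith
            linarith
      have hzm1fix : cc (zm + 1) = zm + 1 := by
        have := hccct zm
        rw [hzmfix] at this
        exact this
      have hsign := sign_up_of_rep cc hccsm hccont zp zm hzpfix hzm1fix
        (by linarith) hnofix hrepz
      have hw₀1 : zp < w₀ := by
        have := hw₀τ 0
        rw [hw₀]
        linarith [hzpb.2]
      have hw₀2 : w₀ < zm + 1 := by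
        rw [hw₀]
        linarith [hzmb.1]
      have hup := hsign w₀ hw₀1 hw₀2
      have hcwlt : cc w₀ < zm + 1 := by
        have := hccsm hw₀2
        rwa [hzm1fix] at this
      have hj₀' := abs_lt.mp hj₀
      have hige : (1:ℝ) ≤ (j₀:ℝ) := by
        have hpos : (0:ℝ) < (j₀:ℝ) := by
          rw [hw₀] at hup
          linarith [hj₀'.1]
        exact_mod_cast (by exact_mod_cast hpos : 0 < j₀)
      have hlt1 : (j₀:ℝ) < 1 := by
        have := hzmb.2
        rw [hw₀] at hcwlt
        linarith [hj₀'.2, hzmb.1]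
      linarith
  obtain ⟨hattrZ, hrepZ⟩ := hmain
  refine ⟨cc, hccG, ⟨pS, qS, hpqS, hpSI, hqSI, hattrS, hrepS, hfixS⟩, zm, zp + k₁,
    hrepZ, attr_translate hccct hattrZ k₁, ?_, ?_⟩
  · have := hρx'
    rw [abs_lt]
    constructor <;> [linarith [hzmb.1, hδε]; linarith [hzmb.2, hδε]]
  · have h1 : |zp + k₁ - y| = |zp - x - d'| := by
      rw [hyd]; ring_nf
    rw [h1, abs_lt]
    have habs := abs_le.mp hsd
    rw [hyy] at hτy'
    constructor
    · linarith [hzpb.1, hτy'.1, habs.2, hδε]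
    · linarith [hzpb.2, hτy'.2, habs.1, hδε]
end
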